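/- arXiv:1812.06650 — 5 statements merged into one kernel-verified Lean document; each statement's English description precedes it below -/
import Mathlib

section
/- The generating function D^+(x,y;t) of Dyck N-meanders (with weights p_{-1}, p_1, p_{-1,1} on N-steps {-1}, {1}, {-1,1}) satisfies the functional equation D^+(x,y;t) = 1 + t(p_{-1} x^{-1} y^{-1} + p_1 x y + p_{-1,1} x^{-1} y)(D^+(x,y;t) - D^+(0,y;t)) + t(p_{-1} x y^{-1} + (p_1 + p_{-1,1}) x y)(D^+(0,y;t) - D^+(0,0;t)) + t(p_1 + p_{-1,1}) x y D^+(0,0;t). -/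
/-- A classical walk `v` is compatible with the N-walk `w` if they have the same
length and the `i`-th step of `v` belongs to the `i`-th N-step of `w`. -/
def Compatible (v : List ℤ) (w : List (Finset ℤ)) : Prop :=
  List.Forall₂ (· ∈ ·) v w

/-- The reachable points of an N-walk: endpoints of all compatible classical walks. -/
def reach (w : List (Finset ℤ)) : Set ℤ :=
  {r | ∃ v : List ℤ, Compatible v w ∧ v.sum = r}

/-- Minimal reachable point. -/
noncomputable def wmin (w : List (Finset ℤ)) : ℤ := sInf (reach w)

/-- Maximal reachable point. -/
noncomputable def wmax (w : List (Finset ℤ)) : ℤ := sSup (reach w)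

/-- A Dyck N-walk: every N-step is one of {-1}, {1}, {-1,1}. -/
def IsDyckNWalk (w : List (Finset ℤ)) : Prop :=
  ∀ s ∈ w, s = {-1} ∨ s = {1} ∨ s = ({-1, 1} : Finset ℤ)

/-- A Motzkin N-walk: every N-step is a nonempty subset of {-1,0,1}. -/
def IsMotzkinNWalk (w : List (Finset ℤ)) : Prop :=
  ∀ s ∈ w, s.Nonempty ∧ s ⊆ ({-1, 0, 1} : Finset ℤ)

/-- A classical meander: all partial sums are nonnegative. -/
def IsMeanderW (v : List ℤ) : Prop := ∀ n : ℕ, 0 ≤ (v.take n).sum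

/-- An N-bridge: compatible with at least one classical walk ending at 0. -/
def IsNBridge (w : List (Finset ℤ)) : Prop := ∃ v, Compatible v w ∧ v.sum = 0

/-- An N-meander: compatible with at least one classical meander. -/
def IsNMeander (w : List (Finset ℤ)) : Prop := ∃ v, Compatible v w ∧ IsMeanderW v

/-- An N-excursion: compatible with at least one classical excursion. -/
def IsNExcursion (w : List (Finset ℤ)) : Prop :=
  ∃ v, Compatible v w ∧ IsMeanderW v ∧ v.sum = 0

/-- Reachable points via compatible meanders (nonnegative partial sums). -/
def reachM (w : List (Finset ℤ)) : Set ℤ :=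
  {r | ∃ v, Compatible v w ∧ IsMeanderW v ∧ v.sum = r}

/-- The three Dyck N-steps: index 0 ↦ {-1} (weight p₋₁), 1 ↦ {1} (weight p₁),
2 ↦ {-1,1} (weight p₋₁,₁). -/
def dstep : Fin 3 → Finset ℤ := ![{-1}, {1}, {-1, 1}]

/-- The Dyck N-walk encoded by a function Fin n → Fin 3. -/
def dwalk {n : ℕ} (f : Fin n → Fin 3) : List (Finset ℤ) := List.ofFn fun k => dstep (f k)

open Classical in
/-- Total weight of Dyck N-meanders of length n with min⁺ = i and max⁺ = j,
i.e. the coefficient of xⁱ yʲ tⁿ in D⁺(x,y;t). -/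
noncomputable def coefD (p : Fin 3 → ℝ) (i j n : ℕ) : ℝ :=
  ∑ f : Fin n → Fin 3,
    if (reachM (dwalk f)).Nonempty ∧ sInf (reachM (dwalk f)) = (i : ℤ) ∧
        sSup (reachM (dwalk f)) = (j : ℤ)
    then ∏ k, p (f k) else 0

/-- D⁺(x,y;t) as a power series in x = X 0, y = X 1, t = X 2. -/
noncomputable def Dxy (p : Fin 3 → ℝ) : MvPowerSeries (Fin 3) ℝ :=
  fun m => coefD p (m 0) (m 1) (m 2)

/-- D⁺(0,y;t). -/
noncomputable def D0y (p : Fin 3 → ℝ) : MvPowerSeries (Fin 3) ℝ :=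
  fun m => if m 0 = 0 then coefD p 0 (m 1) (m 2) else 0

/-- D⁺(0,0;t). -/
noncomputable def D00 (p : Fin 3 → ℝ) : MvPowerSeries (Fin 3) ℝ :=
  fun m => if m 0 = 0 ∧ m 1 = 0 then coefD p 0 0 (m 2) else 0

/-!
The endpoints of the meanders compatible with a Dyck N-walk form either the empty set or a
parity interval `{i, i + 2, …, j} ⊆ ℕ`, and appending an N-step moves `(min⁺, max⁺)` by a rule
that only depends on whether `0 < min⁺`, `min⁺ = 0 < max⁺` or `min⁺ = max⁺ = 0`. On the monomials
`x ^ min⁺ * y ^ max⁺` (multiplied by `xy`) this rule is a linear operator, the three regimes being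
separated by the substitutions `x = 0` and then `y = 0`. Hence the coefficient of `t ^ (n + 1)` in
`xy D⁺` is this operator applied to the coefficient of `t ^ n`, which is the functional equation
read off degree by degree in `t`.
-/

lemma compatible_nil_right {v : List ℤ} : Compatible v [] ↔ v = [] :=
  List.forall₂_nil_right_iff

lemma compatible_append_singleton {v : List ℤ} {w : List (Finset ℤ)} {s : Finset ℤ} :
    Compatible v (w ++ [s]) ↔ ∃ u x, Compatible u w ∧ x ∈ s ∧ v = u ++ [x] := by
  constructor
  · intro h
    obtain ⟨x, l, hx, hl, hdrop⟩ :=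
      List.forall₂_cons_right_iff.mp (List.forall₂_drop_append v w [s] h)
    rw [List.forall₂_nil_right_iff.mp hl] at hdrop
    exact ⟨_, x, List.forall₂_take_append v w [s] h, hx, by
      rw [← hdrop, List.take_append_drop]⟩
  · rintro ⟨u, x, hu, hx, rfl⟩
    exact List.rel_append hu (List.Forall₂.cons hx List.Forall₂.nil)

lemma isMeanderW_append_singleton (v : List ℤ) (x : ℤ) :
    IsMeanderW (v ++ [x]) ↔ IsMeanderW v ∧ 0 ≤ v.sum + x := by
  have take_eq (n : ℕ) : (v ++ [x]).take n = if n ≤ v.length then v.take n else v ++ [x] := by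
    split_ifs with hn
    · exact List.take_append_of_le_length hn
    · exact List.take_of_length_le (by simp; omega)
  constructor
  · intro h
    refine ⟨fun n => ?_, by simpa [take_eq] using h (v.length + 1)⟩
    rcases le_or_gt n v.length with hn | hn
    · simpa [take_eq, hn] using h n
    · simpa [take_eq, List.take_of_length_le hn.le] using h v.length
  · rintro ⟨hv, hx⟩ n
    rw [take_eq]
    split_ifs
    · exact hv n
    · simpa using hx

lemma mem_reachM_append_singleton {w : List (Finset ℤ)} {s : Finset ℤ} {t : ℤ} :
    t ∈ reachM (w ++ [s]) ↔ 0 ≤ t ∧ ∃ x ∈ s, t - x ∈ reachM w := by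
  simp only [reachM, Set.mem_ofPred_eq, compatible_append_singleton]
  constructor
  · rintro ⟨_, ⟨u, x, hu, hx, rfl⟩, hm, rfl⟩
    rw [isMeanderW_append_singleton] at hm
    exact ⟨by simpa using hm.2, x, hx, u, hu, hm.1, by simp⟩
  · rintro ⟨ht, x, hx, u, hu, hm, hsum⟩
    exact ⟨u ++ [x], ⟨u, x, hu, hx, rfl⟩,
      (isMeanderW_append_singleton u x).mpr ⟨hm, by omega⟩, by simp; omega⟩

def parityIcc (i j : ℕ) : Set ℤ := {r | i ≤ r ∧ r ≤ j ∧ 2 ∣ r - i}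

lemma reachM_nil : reachM [] = parityIcc 0 0 := by
  ext r
  simp [reachM, compatible_nil_right, IsMeanderW, parityIcc, eq_comm]
  omega

section Steps

variable {w : List (Finset ℤ)} {i j : ℕ}

lemma reachM_append_of_eq_empty (h : reachM w = ∅) (s : Finset ℤ) : reachM (w ++ [s]) = ∅ := by
  ext t; simp [mem_reachM_append_singleton, h]

lemma reachM_append_down (h : reachM w = parityIcc (i + 1) (j + 1)) :
    reachM (w ++ [{-1}]) = parityIcc i j := by
  ext t; simp [mem_reachM_append_singleton, h, parityIcc]; omega

lemma reachM_append_down_of_zero_zero (h : reachM w = parityIcc 0 0) :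
    reachM (w ++ [{-1}]) = ∅ := by
  ext t; simp [mem_reachM_append_singleton, h, parityIcc]; omega

lemma reachM_append_down_of_zero (h : reachM w = parityIcc 0 (j + 2)) :
    reachM (w ++ [{-1}]) = parityIcc 1 (j + 1) := by
  ext t; simp [mem_reachM_append_singleton, h, parityIcc]; omega

lemma reachM_append_up (h : reachM w = parityIcc i j) :
    reachM (w ++ [{1}]) = parityIcc (i + 1) (j + 1) := by
  ext t; simp [mem_reachM_append_singleton, h, parityIcc]; omega

lemma reachM_append_upDown (h : reachM w = parityIcc (i + 1) j) (hij : i + 1 ≤ j) :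
    reachM (w ++ [{-1, 1}]) = parityIcc i (j + 1) := by
  ext t; simp [mem_reachM_append_singleton, h, parityIcc]; omega

lemma reachM_append_upDown_of_zero (h : reachM w = parityIcc 0 j) :
    reachM (w ++ [{-1, 1}]) = parityIcc 1 (j + 1) := by
  ext t; simp [mem_reachM_append_singleton, h, parityIcc]; omega

end Steps

theorem reachM_eq_empty_or_parityIcc {w : List (Finset ℤ)} (hw : IsDyckNWalk w) :
    reachM w = ∅ ∨ ∃ i j : ℕ, i ≤ j ∧ 2 ∣ j - i ∧ reachM w = parityIcc i j := by
  induction w using List.reverseRecOn with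
  | nil => exact .inr ⟨0, 0, le_rfl, dvd_zero 2, reachM_nil⟩
  | append_singleton w s ih =>
    obtain he | ⟨i, j, hij, hp, h⟩ := ih fun u hu => hw u (by simp [hu])
    · exact .inl (reachM_append_of_eq_empty he s)
    obtain rfl | rfl | rfl := hw s (by simp)
    · rcases i with _ | i
      · rcases j with _ | _ | j
        · exact .inl (reachM_append_down_of_zero_zero h)
        · omega
        · exact .inr ⟨1, j + 1, by omega, by omega, reachM_append_down_of_zero h⟩
      · obtain ⟨j, rfl⟩ : ∃ j', j = j' + 1 := ⟨j - 1, by omega⟩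
        exact .inr ⟨i, j, by omega, by omega, reachM_append_down h⟩
    · exact .inr ⟨i + 1, j + 1, by omega, by omega, reachM_append_up h⟩
    · rcases i with _ | i
      · exact .inr ⟨1, j + 1, by omega, by omega, reachM_append_upDown_of_zero h⟩
      · exact .inr ⟨i, j + 1, by omega, by omega, reachM_append_upDown h (by omega)⟩

lemma isDyckNWalk_dwalk {n : ℕ} (f : Fin n → Fin 3) : IsDyckNWalk (dwalk f) := by
  intro s hs
  obtain ⟨k, rfl⟩ := List.mem_ofFn.mp hs
  generalize f k = a
  fin_cases a <;> simp [dstep]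

lemma dwalk_snoc {n : ℕ} (g : Fin n → Fin 3) (s : Fin 3) :
    dwalk (Fin.snoc g s) = dwalk g ++ [dstep s] := by
  rw [dwalk, dwalk, List.ofFn_succ']
  simp

namespace MvPowerSeries

variable {σ R : Type*} [CommSemiring R]

def sliceIn (i : σ) (n : ℕ) : MvPowerSeries σ R →ₗ[R] MvPowerSeries σ R where
  toFun F m := if m i = n then coeff m F else 0
  map_add' _ _ := funext fun _ => ite_add_zero
  map_smul' r _ := funext fun _ => (smul_ite_zero _ r _).symm

lemma coeff_sliceIn (i : σ) (n : ℕ) (F : MvPowerSeries σ R) (m : σ →₀ ℕ) :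
    coeff m (sliceIn i n F) = if m i = n then coeff m F else 0 :=
  rfl

lemma eq_of_forall_sliceIn_eq (i : σ) {F G : MvPowerSeries σ R}
    (h : ∀ n, sliceIn i n F = sliceIn i n G) : F = G := by
  ext m
  simpa [coeff_sliceIn] using congrArg (coeff m) (h (m i))

lemma sliceIn_comm (i j : σ) (n k : ℕ) (F : MvPowerSeries σ R) :
    sliceIn i n (sliceIn j k F) = sliceIn j k (sliceIn i n F) := by
  ext m
  simp only [coeff_sliceIn]
  split_ifs <;> rfl

lemma sliceIn_succ_X_mul (i : σ) (n : ℕ) (F : MvPowerSeries σ R) :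
    sliceIn i (n + 1) (X i * F) = X i * sliceIn i n F := by
  ext m
  rw [X, coeff_monomial_mul, coeff_sliceIn, coeff_monomial_mul, coeff_sliceIn]
  obtain h0 | ⟨k, hk⟩ : m i = 0 ∨ ∃ k, m i = k + 1 := by
    rcases m i with _ | k <;> simp
  · simp [Finsupp.single_le_iff, h0]
  · simp [Finsupp.single_le_iff, hk]

variable [DecidableEq σ]

lemma sliceIn_zero_mul (i : σ) (F G : MvPowerSeries σ R) :
    sliceIn i 0 (F * G) = sliceIn i 0 F * sliceIn i 0 G := by
  ext m
  simp only [coeff_sliceIn, coeff_mul]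
  split_ifs with hm
  · refine Finset.sum_congr rfl fun uv huv => ?_
    have := congrArg (· i) (Finset.HasAntidiagonal.mem_antidiagonal.mp huv)
    simp only [Finsupp.add_apply] at this
    rw [if_pos (by omega), if_pos (by omega)]
  · refine (Finset.sum_eq_zero fun uv huv => ?_).symm
    have := congrArg (· i) (Finset.HasAntidiagonal.mem_antidiagonal.mp huv)
    simp only [Finsupp.add_apply] at this
    split_ifs <;> first | simp | omega

/-- The substitution `X i ↦ 0`. -/
noncomputable def evalZero (i : σ) : MvPowerSeries σ R →ₐ[R] MvPowerSeries σ R :=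
  AlgHom.ofLinearMap (sliceIn i 0)
    (by ext m; simp [coeff_sliceIn, coeff_one]; aesop) (sliceIn_zero_mul i)

lemma evalZero_apply (i : σ) (F : MvPowerSeries σ R) : evalZero i F = sliceIn i 0 F :=
  rfl

@[simp]
lemma evalZero_X_self (i : σ) : evalZero i (X i : MvPowerSeries σ R) = 0 := by
  ext m
  simp [evalZero_apply, coeff_sliceIn, coeff_X]
  aesop

@[simp]
lemma evalZero_X_of_ne {i j : σ} (h : j ≠ i) : evalZero i (X j : MvPowerSeries σ R) = X j := by
  ext m
  simp [evalZero_apply, coeff_sliceIn, coeff_X]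
  aesop

@[simp]
lemma evalZero_C (i : σ) (r : R) : evalZero i (C r : MvPowerSeries σ R) = C r := by
  ext m
  simp [evalZero_apply, coeff_sliceIn, coeff_C]
  aesop

lemma sliceIn_evalZero (i j : σ) (n : ℕ) (F : MvPowerSeries σ R) :
    sliceIn i n (evalZero j F) = evalZero j (sliceIn i n F) :=
  sliceIn_comm i j n 0 F

lemma sliceIn_mul_of_evalZero_eq {i : σ} {G : MvPowerSeries σ R} (hG : evalZero i G = G)
    (n : ℕ) (F : MvPowerSeries σ R) : sliceIn i n (G * F) = G * sliceIn i n F := by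
  have hG' (u : σ →₀ ℕ) (hu : u i ≠ 0) : coeff u G = 0 := by
    rw [← hG, evalZero_apply, coeff_sliceIn, if_neg hu]
  ext m
  simp only [coeff_sliceIn, coeff_mul]
  split_ifs with hm
  · refine Finset.sum_congr rfl fun uv huv => ?_
    have := congrArg (· i) (Finset.HasAntidiagonal.mem_antidiagonal.mp huv)
    simp only [Finsupp.add_apply] at this
    by_cases hu : uv.1 i = 0
    · rw [if_pos (by omega)]
    · rw [hG' _ hu, zero_mul, zero_mul]
  · refine (Finset.sum_eq_zero fun uv huv => ?_).symm
    have := congrArg (· i) (Finset.HasAntidiagonal.mem_antidiagonal.mp huv)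
    simp only [Finsupp.add_apply] at this
    by_cases hu : uv.1 i = 0
    · rw [if_neg (by omega), mul_zero]
    · rw [hG' _ hu, zero_mul]

lemma sliceIn_of_evalZero_eq {i : σ} {G : MvPowerSeries σ R} (hG : evalZero i G = G) (n : ℕ) :
    sliceIn i n G = if n = 0 then G else 0 := by
  split_ifs with hn
  · rw [hn, ← evalZero_apply, hG]
  · ext m
    rw [← hG, evalZero_apply, sliceIn_comm, coeff_sliceIn, coeff_sliceIn, map_zero]
    split_ifs <;> first | rfl | omega

end MvPowerSeries

lemma csInf_parityIcc {i j : ℕ} (hij : i ≤ j) : sInf (parityIcc i j) = i :=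
  IsLeast.csInf_eq ⟨⟨le_rfl, by omega, by simp⟩, fun _ hr => hr.1⟩

lemma csSup_parityIcc {i j : ℕ} (hij : i ≤ j) (hp : 2 ∣ j - i) : sSup (parityIcc i j) = j :=
  IsGreatest.csSup_eq ⟨⟨by omega, le_rfl, by omega⟩, fun _ hr => hr.2.1⟩

open MvPowerSeries

open Classical in
/-- `x ^ min⁺ w * y ^ max⁺ w` if `w` is an N-meander, and `0` otherwise. -/
noncomputable def meanderMonomial (w : List (Finset ℤ)) : MvPowerSeries (Fin 3) ℝ :=
  fun m => if m 2 = 0 ∧ (reachM w).Nonempty ∧ sInf (reachM w) = m 0 ∧ sSup (reachM w) = m 1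
    then 1 else 0

open Classical in
lemma coeff_meanderMonomial (w : List (Finset ℤ)) (m : Fin 3 →₀ ℕ) :
    coeff m (meanderMonomial w) = if m 2 = 0 ∧ (reachM w).Nonempty ∧ sInf (reachM w) = m 0 ∧
      sSup (reachM w) = m 1 then 1 else 0 :=
  rfl

lemma meanderMonomial_of_eq_empty {w : List (Finset ℤ)} (h : reachM w = ∅) :
    meanderMonomial w = 0 := by
  ext m
  simp [coeff_meanderMonomial, h]

lemma meanderMonomial_of_eq_parityIcc {w : List (Finset ℤ)} {i j : ℕ}
    (h : reachM w = parityIcc i j) (hij : i ≤ j) (hp : 2 ∣ j - i) :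
    meanderMonomial w = X 0 ^ i * X 1 ^ j := by
  classical
  ext m
  rw [X_pow_eq, X_pow_eq, monomial_mul_monomial, coeff_monomial, coeff_meanderMonomial, mul_one]
  refine if_congr ?_ rfl rfl
  rw [h, csInf_parityIcc hij, csSup_parityIcc hij hp]
  have hne : (parityIcc i j).Nonempty := ⟨i, le_rfl, by omega, by simp⟩
  simp [hne, Finsupp.ext_iff, Fin.forall_fin_succ]
  omega

lemma D0y_eq_evalZero (p : Fin 3 → ℝ) : D0y p = evalZero 0 (Dxy p) := by
  ext m
  rw [evalZero_apply, coeff_sliceIn]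
  split_ifs with h
  · simp only [D0y, Dxy, coeff_apply, h, if_true]
  · simp only [D0y, coeff_apply, h, if_false]

lemma D00_eq_evalZero (p : Fin 3 → ℝ) : D00 p = evalZero 1 (evalZero 0 (Dxy p)) := by
  ext m
  rw [evalZero_apply, evalZero_apply, coeff_sliceIn, coeff_sliceIn]
  by_cases h : m 0 = 0 ∧ m 1 = 0
  · simp only [D00, Dxy, coeff_apply, h, if_true, and_self]
  · simp only [D00, coeff_apply, if_neg h]
    split_ifs <;> tauto

noncomputable def meanderPoly (p : Fin 3 → ℝ) (n : ℕ) : MvPowerSeries (Fin 3) ℝ :=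
  ∑ f : Fin n → Fin 3, (∏ k, p (f k)) • meanderMonomial (dwalk f)

lemma coeff_meanderPoly (p : Fin 3 → ℝ) (n : ℕ) (m : Fin 3 →₀ ℕ) :
    coeff m (meanderPoly p n) = if m 2 = 0 then coefD p (m 0) (m 1) n else 0 := by
  classical
  simp only [meanderPoly, map_sum, map_smul, coeff_meanderMonomial, smul_eq_mul, coefD]
  split_ifs with h
  · refine Finset.sum_congr rfl fun f _ => ?_
    split_ifs <;> simp_all
  · exact Finset.sum_eq_zero fun f _ => by simp [h]

lemma sliceIn_two_Dxy (p : Fin 3 → ℝ) (n : ℕ) :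
    sliceIn 2 n (Dxy p) = X 2 ^ n * meanderPoly p n := by
  classical
  ext m
  rw [coeff_sliceIn, X_pow_eq, coeff_monomial_mul, coeff_meanderPoly]
  by_cases h : m 2 = n
  · subst h
    simp [Dxy, coeff_apply]
  · simp only [if_neg h, Finsupp.single_le_iff, Finsupp.tsub_apply, Finsupp.single_eq_same]
    split_ifs with hle hsub
    · exact absurd (le_antisymm (Nat.sub_eq_zero_iff_le.mp hsub) hle) h
    all_goals simp

lemma meanderPoly_zero (p : Fin 3 → ℝ) : meanderPoly p 0 = 1 := by
  rw [meanderPoly, Fintype.sum_unique, Finset.univ_eq_empty, Finset.prod_empty, one_smul,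
    meanderMonomial_of_eq_parityIcc (i := 0) (j := 0) (by simpa [dwalk] using reachM_nil)
      le_rfl (dvd_zero 2)]
  simp

noncomputable def stepOperator (p : Fin 3 → ℝ) :
    MvPowerSeries (Fin 3) ℝ →ₗ[ℝ] MvPowerSeries (Fin 3) ℝ where
  toFun F :=
    (C (p 0) + C (p 1) * X 0 ^ 2 * X 1 ^ 2 + C (p 2) * X 1 ^ 2) * (F - evalZero 0 F)
      + (C (p 0) * X 0 ^ 2 + C (p 1 + p 2) * X 0 ^ 2 * X 1 ^ 2)
        * (evalZero 0 F - evalZero 1 (evalZero 0 F))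
      + C (p 1 + p 2) * X 0 ^ 2 * X 1 ^ 2 * evalZero 1 (evalZero 0 F)
  map_add' F G := by simp only [map_add]; ring
  map_smul' r F := by
    simp only [map_smul, RingHom.id_apply]
    simp only [smul_eq_C_mul]
    ring

lemma stepOperator_apply (p : Fin 3 → ℝ) (F : MvPowerSeries (Fin 3) ℝ) :
    stepOperator p F =
      (C (p 0) + C (p 1) * X 0 ^ 2 * X 1 ^ 2 + C (p 2) * X 1 ^ 2) * (F - evalZero 0 F)
      + (C (p 0) * X 0 ^ 2 + C (p 1 + p 2) * X 0 ^ 2 * X 1 ^ 2)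
        * (evalZero 0 F - evalZero 1 (evalZero 0 F))
      + C (p 1 + p 2) * X 0 ^ 2 * X 1 ^ 2 * evalZero 1 (evalZero 0 F) :=
  rfl

lemma stepOperator_X_two_pow_mul (p : Fin 3 → ℝ) (n : ℕ) (F : MvPowerSeries (Fin 3) ℝ) :
    stepOperator p (X 2 ^ n * F) = X 2 ^ n * stepOperator p F := by
  simp only [stepOperator_apply, map_mul, map_pow, evalZero_X_of_ne (by decide : (2 : Fin 3) ≠ 0),
    evalZero_X_of_ne (by decide : (2 : Fin 3) ≠ 1)]
  ring

lemma stepOperator_sliceIn_two (p : Fin 3 → ℝ) (n : ℕ) (F : MvPowerSeries (Fin 3) ℝ) :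
    stepOperator p (sliceIn 2 n F) = sliceIn 2 n (stepOperator p F) := by
  simp [stepOperator_apply, sliceIn_evalZero, sliceIn_mul_of_evalZero_eq]

lemma X_zero_mul_X_one_mul_sum_meanderMonomial_append {w : List (Finset ℤ)} (hw : IsDyckNWalk w)
    (p : Fin 3 → ℝ) :
    X 0 * X 1 * ∑ s, p s • meanderMonomial (w ++ [dstep s]) =
      stepOperator p (meanderMonomial w) := by
  simp only [Fin.sum_univ_three, dstep, Matrix.cons_val_zero, Matrix.cons_val_one,
    Matrix.cons_val_two, Matrix.head_cons, Matrix.tail_cons, smul_eq_C_mul]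
  obtain he | ⟨i, j, hij, hp, h⟩ := reachM_eq_empty_or_parityIcc hw
  · simp [meanderMonomial_of_eq_empty, he, reachM_append_of_eq_empty]
  rcases i with _ | i
  · rcases j with _ | _ | j
    · rw [meanderMonomial_of_eq_empty (reachM_append_down_of_zero_zero h),
        meanderMonomial_of_eq_parityIcc (reachM_append_up h) (by omega) (by omega),
        meanderMonomial_of_eq_parityIcc (reachM_append_upDown_of_zero h) (by omega) (by omega),
        meanderMonomial_of_eq_parityIcc h hij hp]
      simp [stepOperator_apply]
      ring
    · omega
    · rw [meanderMonomial_of_eq_parityIcc (reachM_append_down_of_zero h) (by omega) (by omega),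
        meanderMonomial_of_eq_parityIcc (reachM_append_up h) (by omega) (by omega),
        meanderMonomial_of_eq_parityIcc (reachM_append_upDown_of_zero h) (by omega) (by omega),
        meanderMonomial_of_eq_parityIcc h hij hp]
      simp [stepOperator_apply]
      ring
  · obtain ⟨j, rfl⟩ : ∃ j', j = j' + 1 := ⟨j - 1, by omega⟩
    rw [meanderMonomial_of_eq_parityIcc (reachM_append_down h) (by omega) (by omega),
      meanderMonomial_of_eq_parityIcc (reachM_append_up h) (by omega) (by omega),
      meanderMonomial_of_eq_parityIcc (reachM_append_upDown h (by omega)) (by omega) (by omega),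
      meanderMonomial_of_eq_parityIcc h hij hp]
    simp [stepOperator_apply]
    ring

lemma meanderPoly_succ (p : Fin 3 → ℝ) (n : ℕ) :
    meanderPoly p (n + 1) =
      ∑ g : Fin n → Fin 3, (∏ k, p (g k)) • ∑ s, p s • meanderMonomial (dwalk g ++ [dstep s]) := by
  rw [meanderPoly, ← (Fin.snocEquiv fun _ => Fin 3).sum_comp, Fintype.sum_prod_type,
    Finset.sum_comm]
  refine Finset.sum_congr rfl fun g _ => ?_
  rw [Finset.smul_sum]
  refine Finset.sum_congr rfl fun s _ => ?_
  rw [show (Fin.snocEquiv fun _ => Fin 3) (s, g) = Fin.snoc g s from rfl, dwalk_snoc]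
  simp [Fin.prod_univ_castSucc, mul_smul]

lemma X_zero_mul_X_one_mul_meanderPoly_succ (p : Fin 3 → ℝ) (n : ℕ) :
    X 0 * X 1 * meanderPoly p (n + 1) = stepOperator p (meanderPoly p n) := by
  rw [meanderPoly_succ, meanderPoly, Finset.mul_sum, map_sum]
  simp only [mul_smul_comm, X_zero_mul_X_one_mul_sum_meanderMonomial_append (isDyckNWalk_dwalk _),
    map_smul]

lemma X_zero_mul_X_one_mul_Dxy (p : Fin 3 → ℝ) :
    X 0 * X 1 * Dxy p = X 0 * X 1 + X 2 * stepOperator p (Dxy p) := by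
  have hxy : evalZero 2 (X 0 * X 1 : MvPowerSeries (Fin 3) ℝ) = X 0 * X 1 := by simp
  refine eq_of_forall_sliceIn_eq 2 fun n => ?_
  rw [map_add, sliceIn_mul_of_evalZero_eq hxy, sliceIn_of_evalZero_eq hxy, sliceIn_two_Dxy]
  rcases n with _ | n
  · rw [← evalZero_apply, map_mul, evalZero_X_self, zero_mul, meanderPoly_zero]
    simp
  · rw [sliceIn_succ_X_mul, ← stepOperator_sliceIn_two, sliceIn_two_Dxy,
      stepOperator_X_two_pow_mul, ← X_zero_mul_X_one_mul_meanderPoly_succ]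
    simp only [Nat.add_one_ne_zero, if_false, zero_add]
    ring

open MvPowerSeries in
/-- Multiplied through by `xy` to clear the negative powers of `x` and `y`. -/
theorem dyck_meander_functional_equation (p : Fin 3 → ℝ) :
    (X 0 : MvPowerSeries (Fin 3) ℝ) * X 1 * Dxy p =
      X 0 * X 1
      + X 2 * (C (σ := Fin 3) (R := ℝ) (p 0) + C (σ := Fin 3) (R := ℝ) (p 1) * X 0 ^ 2 * X 1 ^ 2
          + C (σ := Fin 3) (R := ℝ) (p 2) * X 1 ^ 2) * (Dxy p - D0y p)
      + X 2 * (C (σ := Fin 3) (R := ℝ) (p 0) * X 0 ^ 2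
          + C (σ := Fin 3) (R := ℝ) (p 1 + p 2) * X 0 ^ 2 * X 1 ^ 2) * (D0y p - D00 p)
      + X 2 * C (σ := Fin 3) (R := ℝ) (p 1 + p 2) * X 0 ^ 2 * X 1 ^ 2 * D00 p := by
  rw [D0y_eq_evalZero, D00_eq_evalZero, X_zero_mul_X_one_mul_Dxy, stepOperator_apply]
  ring
end

section
/- With all weights equal to 1, the generating function of Dyck N-meanders counted by length equals D^+(1,1;t) = -(1 - 4t - sqrt(1-8t^2)) / (4t(1-3t)), with series expansion 1 + 2t + 6t^2 + 16t^3 + 48t^4 + ... -/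
/-- Number of Dyck N-meanders of length n. -/
noncomputable def dyckMeanderCount (n : ℕ) : ℕ :=
  Nat.card {w : List (Finset ℤ) // w.length = n ∧ IsDyckNWalk w ∧ IsNMeander w}

section ListCount

variable {α : Type*}

instance finite_length_eq_and [Finite α] (n : ℕ) (P : List α → Prop) :
    Finite {u : List α // u.length = n ∧ P u} :=
  ((List.finite_length_eq α n).subset fun _ hu => hu.1).to_subtype

theorem Nat.card_length_zero_and (P : List α → Prop) [Decidable (P [])] :
    Nat.card {u : List α // u.length = 0 ∧ P u} = if P [] then 1 else 0 := by
  simp only [List.length_eq_zero_iff]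
  split_ifs with h
  · exact Nat.card_eq_one_iff_exists.2 ⟨⟨[], rfl, h⟩, fun u => Subtype.ext u.2.1⟩
  · have : IsEmpty {u : List α // u = [] ∧ P u} := ⟨fun u => h (u.2.1 ▸ u.2.2)⟩
    exact Nat.card_of_isEmpty

theorem Nat.card_length_succ_and [Fintype α] (n : ℕ) (P : List α → Prop) :
    Nat.card {u : List α // u.length = n + 1 ∧ P u} =
      ∑ a, Nat.card {u : List α // u.length = n ∧ P (a :: u)} := by
  rw [← Nat.card_sigma]
  refine (Nat.card_eq_of_bijective
    (fun x : (a : α) × {u : List α // u.length = n ∧ P (a :: u)} =>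
      (⟨x.1 :: x.2.1, by simp [x.2.2.1], x.2.2.2⟩ : {u : List α // u.length = n + 1 ∧ P u}))
    ⟨?_, ?_⟩).symm
  · rintro ⟨a, u, hu⟩ ⟨b, v, hv⟩ h
    simp only [Subtype.mk.injEq, List.cons.injEq] at h
    obtain ⟨rfl, rfl⟩ := h
    rfl
  · rintro ⟨_ | ⟨a, u⟩, hl, hP⟩
    · simp at hl
    · exact ⟨⟨a, u, by simpa using hl, hP⟩, rfl⟩

theorem Nat.card_subtype_eq_card_and_add_card_and_not {β : Type*} (p q : β → Prop)
    [Finite {x // p x}] :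
    Nat.card {x // p x} = Nat.card {x // p x ∧ q x} + Nat.card {x // p x ∧ ¬q x} := by
  classical
  rw [← Nat.card_congr (Equiv.subtypeSubtypeEquivSubtypeInter p q),
    ← Nat.card_congr (Equiv.subtypeSubtypeEquivSubtypeInter p (¬q ·)), ← Nat.card_sum]
  exact Nat.card_congr (Equiv.sumCompl fun x : {x // p x} => q x).symm

end ListCount

def SuffixSumsNonneg (v : List ℤ) : Prop := ∀ n, 0 ≤ (v.drop n).sum

theorem SuffixSumsNonneg.sum_nonneg {v : List ℤ} (hv : SuffixSumsNonneg v) : 0 ≤ v.sum := hv 0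

theorem suffixSumsNonneg_cons {x : ℤ} {v : List ℤ} :
    SuffixSumsNonneg (x :: v) ↔ SuffixSumsNonneg v ∧ 0 ≤ x + v.sum :=
  ⟨fun h => ⟨fun n => h (n + 1), by simpa using h 0⟩,
    fun ⟨hv, hx⟩ n => by cases n with
      | zero => simpa using hx
      | succ n => simpa using hv n⟩

theorem isMeanderW_reverse_iff {v : List ℤ} : IsMeanderW v.reverse ↔ SuffixSumsNonneg v := by
  refine ⟨fun h n => ?_, fun h n => ?_⟩
  · rcases le_or_gt n v.length with hn | hn
    · simpa [List.take_reverse, Nat.sub_sub_self hn] using h (v.length - n)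
    · simp [List.drop_eq_nil_of_le hn.le]
  · simpa [List.take_reverse] using h (v.length - n)

theorem IsMeanderW.mono {v v' : List ℤ} (hle : List.Forall₂ (· ≤ ·) v v') (hv : IsMeanderW v) :
    IsMeanderW v' :=
  fun n => (hv n).trans (List.forall₂_take n hle).sum_le_sum

theorem isNMeander_map_iff {β : Type*} (code : β → Finset ℤ) (step : β → ℤ)
    (hmem : ∀ b, step b ∈ code b) (hle : ∀ b, ∀ x ∈ code b, x ≤ step b) (u : List β) :
    IsNMeander (u.map code) ↔ IsMeanderW (u.map step) := by
  refine ⟨fun ⟨v, hc, hv⟩ => hv.mono ?_, fun h => ⟨u.map step, ?_, h⟩⟩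
  · rw [Compatible, List.forall₂_map_right_iff] at hc
    exact List.forall₂_map_right_iff.2 (hc.imp fun {_ _} => hle _ _)
  · rw [Compatible, List.forall₂_map_right_iff, List.forall₂_map_left_iff]
    exact List.forall₂_same.2 fun b _ => hmem b

theorem catalan_eq_choose_sub_choose (k : ℕ) :
    (catalan k : ℤ) = (2 * k).choose k - (2 * k).choose (k + 1) := by
  have hcat : ((k + 1) * catalan k : ℤ) = (2 * k).choose k := by
    exact_mod_cast succ_mul_catalan_eq_centralBinom k
  have hsucc : ((2 * k).choose (k + 1) * (k + 1) : ℤ) = (2 * k).choose k * k := by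
    have := Nat.choose_succ_right_eq (2 * k) k
    rw [show 2 * k - k = k by omega] at this
    exact_mod_cast this
  refine mul_left_cancel₀ (show (k + 1 : ℤ) ≠ 0 by positivity) ?_
  linear_combination hcat + hsucc

open Finset in
theorem catalan_mul_pow_succ (x : ℝ) (k : ℕ) :
    (catalan (k + 1) : ℝ) * x ^ (k + 1) =
      x * ∑ i ∈ range (k + 1), (catalan i * x ^ i) * (catalan (k - i) * x ^ (k - i)) := by
  rw [catalan_succ, Fin.sum_univ_eq_sum_range (fun i => catalan i * catalan (k - i)), mul_sum]
  push_cast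
  rw [sum_mul]
  refine sum_congr rfl fun i hi => ?_
  rw [show k + 1 = 1 + i + (k - i) by have := mem_range.1 hi; omega, pow_add, pow_add]
  ring

noncomputable def catalanGF (x : ℝ) : ℝ := (1 - √(1 - 4 * x)) / (2 * x)

section CatalanGF

variable {x : ℝ}

theorem two_mul_mul_catalanGF (hx0 : x ≠ 0) : 2 * x * catalanGF x = 1 - √(1 - 4 * x) := by
  rw [catalanGF]
  field_simp

theorem catalanGF_nonneg (hx0 : 0 < x) : 0 ≤ catalanGF x := by
  have : √(1 - 4 * x) ≤ 1 := Real.sqrt_le_one.2 (by linarith)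
  exact div_nonneg (by linarith) (by positivity)

theorem one_add_mul_catalanGF_sq (hx0 : 0 < x) (hx : x ≤ 1 / 4) :
    1 + x * catalanGF x ^ 2 = catalanGF x := by
  have hsqrt : √(1 - 4 * x) ^ 2 = 1 - 4 * x := Real.sq_sqrt (by linarith)
  refine mul_left_cancel₀ hx0.ne' (sub_eq_zero.1 ?_)
  linear_combination (x * catalanGF x / 2 - (1 + √(1 - 4 * x)) / 4) * two_mul_mul_catalanGF hx0.ne'
    + hsqrt / 4

open Finset in
/-- The partial sums stay below `catalanGF x` because `y ↦ 1 + x y²` maps `[0, catalanGF x]`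
into itself, and truncating the Catalan convolution only drops nonnegative terms. -/
theorem sum_range_catalan_mul_pow_le (hx0 : 0 < x) (hx : x ≤ 1 / 4) (N : ℕ) :
    ∑ k ∈ range N, (catalan k : ℝ) * x ^ k ≤ catalanGF x := by
  set a : ℕ → ℝ := fun k => catalan k * x ^ k
  have ha : ∀ k, 0 ≤ a k := fun k => by positivity
  induction N with
  | zero => simpa using catalanGF_nonneg hx0
  | succ N ih =>
    have hconv : ∑ k ∈ range N, a (k + 1) ≤ x * (∑ k ∈ range N, a k) ^ 2 :=
      calc ∑ k ∈ range N, a (k + 1)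
          = x * ∑ k ∈ range N, ∑ i ∈ range (k + 1), a i * a (k - i) := by
            simp only [a, catalan_mul_pow_succ, mul_sum]
        _ = x * ∑ i ∈ range N, ∑ j ∈ range (N - i), a i * a j := by
            rw [sum_range_diag_flip N fun i j => a i * a j]
        _ ≤ x * ∑ i ∈ range N, ∑ j ∈ range N, a i * a j := by
            gcongr with i
            exact N.sub_le i
        _ = x * (∑ k ∈ range N, a k) ^ 2 := by rw [sq, sum_mul_sum]
    calc ∑ k ∈ range (N + 1), a k = 1 + ∑ k ∈ range N, a (k + 1) := by
          simp [sum_range_succ', a, add_comm]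
      _ ≤ 1 + x * catalanGF x ^ 2 := by
          gcongr
          exact hconv.trans (by gcongr)
      _ = catalanGF x := one_add_mul_catalanGF_sq hx0 hx

theorem hasSum_catalan_mul_pow (hx0 : 0 < x) (hx : x ≤ 1 / 4) :
    HasSum (fun k => (catalan k : ℝ) * x ^ k) (catalanGF x) := by
  set a : ℕ → ℝ := fun k => catalan k * x ^ k
  have ha : ∀ k, 0 ≤ a k := fun k => by positivity
  have hsum : Summable a := summable_of_sum_range_le ha (sum_range_catalan_mul_pow_le hx0 hx)
  set S := ∑' k, a k
  have hle : S ≤ catalanGF x :=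
    Real.tsum_le_of_sum_range_le ha (sum_range_catalan_mul_pow_le hx0 hx)
  have hnorm : Summable fun k => ‖a k‖ := by simpa [Real.norm_of_nonneg (ha _)] using hsum
  have hcauchy := (hasSum_sum_range_mul_of_summable_norm hnorm hnorm).mul_left x
  simp only [a, ← catalan_mul_pow_succ] at hcauchy
  have hshift : HasSum (fun k => a (k + 1)) (S - 1) := by
    simpa [a] using (hasSum_nat_add_iff' 1).2 hsum.hasSum
  have hquad : x * (S * S) = S - 1 := hcauchy.unique hshift
  -- `S` and `catalanGF x` are both roots of `1 + x y² = y`; the other root exceeds `1 / (2x)`.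
  suffices S = catalanGF x from this ▸ hsum.hasSum
  refine le_antisymm hle (not_lt.1 fun hlt => ?_)
  have := one_add_mul_catalanGF_sq hx0 hx
  have := two_mul_mul_catalanGF hx0.ne'
  nlinarith [mul_pos (sub_pos.2 hlt) hx0, Real.sqrt_nonneg (1 - 4 * x)]

end CatalanGF

theorem HasSum.of_succ_eq_mul_sub {K : Type*} [Field K] [TopologicalSpace K] [IsTopologicalRing K]
    [T2Space K] {a b : ℕ → K} {c t B : K} (hrec : ∀ n, a (n + 1) = c * a n - b n)
    (ha : Summable fun n => a n * t ^ n) (hb : HasSum (fun n => b n * t ^ n) B) (hct : c * t ≠ 1) :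
    HasSum (fun n => a n * t ^ n) ((a 0 - t * B) / (1 - c * t)) := by
  set A := ∑' n, a n * t ^ n
  have hshift : HasSum (fun n => a (n + 1) * t ^ (n + 1)) (A - a 0) := by
    simpa using (hasSum_nat_add_iff' 1).2 ha.hasSum
  have hrec' : HasSum (fun n => a (n + 1) * t ^ (n + 1)) (c * t * A - t * B) := by
    have hterm : (fun n => a (n + 1) * t ^ (n + 1)) =
        fun n => c * t * (a n * t ^ n) - t * (b n * t ^ n) := by
      funext n
      rw [hrec, pow_succ]
      ring
    exact hterm ▸ (ha.hasSum.mul_left (c * t)).sub (hb.mul_left t)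
  suffices A = (a 0 - t * B) / (1 - c * t) from this ▸ ha.hasSum
  rw [eq_div_iff (sub_ne_zero.2 hct.symm)]
  linear_combination hshift.unique hrec'

namespace DyckMeander

def code : Fin 3 → Finset ℤ := ![{-1}, {1}, {-1, 1}]

def step : Fin 3 → ℤ := ![-1, 1, 1]

theorem code_injective : Function.Injective code := by decide

theorem isDyckNWalk_iff_mem_range {w : List (Finset ℤ)} :
    IsDyckNWalk w ↔ w ∈ Set.range (List.map code) := by
  simp only [IsDyckNWalk, Set.range_list_map, Set.mem_ofPred_eq, Set.mem_range,
    Fin.exists_fin_succ, IsEmpty.exists_iff, or_false]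
  exact forall₂_congr fun _ _ => by simp [code, eq_comm, or_comm]

theorem isNMeander_map_code (u : List (Fin 3)) :
    IsNMeander (u.map code) ↔ IsMeanderW (u.map step) :=
  isNMeander_map_iff code step (by decide) (by decide) u

theorem even_sum_map_step_add_length (u : List (Fin 3)) : Even ((u.map step).sum + u.length) := by
  induction u with
  | nil => simp
  | cons i u ih =>
    have hi : Even (step i + 1) := by fin_cases i <;> decide
    have hsplit : ((i :: u).map step).sum + (i :: u).length =
        (step i + 1) + ((u.map step).sum + u.length) := by
      simp only [List.map_cons, List.sum_cons, List.length_cons]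
      push_cast
      ring
    exact hsplit ▸ hi.add ih

/-- A word `u` stands for the Dyck N-walk `(u.map code).reverse`: reading walks backwards turns
appending a step into `List.cons`. -/
noncomputable def count (n : ℕ) : ℕ :=
  Nat.card {u : List (Fin 3) // u.length = n ∧ SuffixSumsNonneg (u.map step)}

noncomputable def countAt (n : ℕ) (h : ℤ) : ℕ :=
  Nat.card {u : List (Fin 3) //
    u.length = n ∧ SuffixSumsNonneg (u.map step) ∧ (u.map step).sum = h}

theorem isNMeander_reverse_map_code (u : List (Fin 3)) :
    IsNMeander (u.map code).reverse ↔ SuffixSumsNonneg (u.map step) := by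
  rw [← List.map_reverse, isNMeander_map_code, List.map_reverse, isMeanderW_reverse_iff]

theorem dyckMeanderCount_eq_count (n : ℕ) : dyckMeanderCount n = count n := by
  refine (Nat.card_eq_of_bijective (fun u => ⟨(u.1.map code).reverse, by simp [u.2.1],
    isDyckNWalk_iff_mem_range.2 ⟨u.1.reverse, by simp⟩, (isNMeander_reverse_map_code _).2 u.2.2⟩)
    ⟨?_, ?_⟩).symm
  · intro u v h
    simp only [Subtype.mk.injEq, List.reverse_inj] at h
    exact Subtype.ext ((List.map_injective_iff.2 code_injective) h)
  · rintro ⟨w, hl, hd, hm⟩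
    obtain ⟨u, rfl⟩ := isDyckNWalk_iff_mem_range.1 hd
    refine ⟨⟨u.reverse, by simpa using hl, ?_⟩, by simp⟩
    rwa [← isNMeander_reverse_map_code, List.map_reverse, List.reverse_reverse]

theorem countAt_zero (h : ℤ) : countAt 0 h = if h = 0 then 1 else 0 := by
  classical
  rw [countAt, Nat.card_length_zero_and]
  simp [SuffixSumsNonneg, eq_comm]

theorem count_zero : count 0 = 1 := by
  classical
  rw [count, Nat.card_length_zero_and]
  simp [SuffixSumsNonneg]

theorem countAt_eq_zero_of_neg {n : ℕ} {h : ℤ} (hh : h < 0) : countAt n h = 0 := by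
  have : IsEmpty {u : List (Fin 3) // u.length = n ∧ SuffixSumsNonneg (u.map step) ∧
      (u.map step).sum = h} :=
    ⟨fun u => (u.2.2.2 ▸ u.2.2.1.sum_nonneg).not_gt hh⟩
  exact Nat.card_of_isEmpty

theorem countAt_eq_zero_of_odd {n : ℕ} {h : ℤ} (hodd : Odd (h + n)) : countAt n h = 0 := by
  have : IsEmpty {u : List (Fin 3) // u.length = n ∧ SuffixSumsNonneg (u.map step) ∧
      (u.map step).sum = h} :=
    ⟨fun ⟨u, hl, _, hs⟩ => Int.not_even_iff_odd.2 hodd (hs ▸ hl ▸ even_sum_map_step_add_length u)⟩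
  exact Nat.card_of_isEmpty

theorem countAt_succ (n : ℕ) {h : ℤ} (hh : 0 ≤ h) :
    countAt (n + 1) h = countAt n (h + 1) + 2 * countAt n (h - 1) := by
  have hcons (i : Fin 3) : Nat.card {u : List (Fin 3) // u.length = n ∧
      SuffixSumsNonneg ((i :: u).map step) ∧ ((i :: u).map step).sum = h} =
      countAt n (h - step i) := by
    refine Nat.card_congr (Equiv.subtypeEquivRight fun u => ?_)
    simp only [List.map_cons, suffixSumsNonneg_cons, List.sum_cons]
    constructor
    · rintro ⟨hl, ⟨hs, -⟩, rfl⟩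
      exact ⟨hl, hs, by ring⟩
    · rintro ⟨hl, hs, hsum⟩
      exact ⟨hl, ⟨hs, by omega⟩, by omega⟩
  rw [countAt, Nat.card_length_succ_and, Fin.sum_univ_three, hcons, hcons, hcons]
  simp only [step, Matrix.cons_val]
  rw [sub_neg_eq_add]
  ring

theorem count_succ (n : ℕ) : count (n + 1) + countAt n 0 = 3 * count n := by
  have hdown : Nat.card {u : List (Fin 3) // u.length = n ∧
      SuffixSumsNonneg ((0 :: u).map step)} = Nat.card {u : List (Fin 3) //
        (u.length = n ∧ SuffixSumsNonneg (u.map step)) ∧ ¬(u.map step).sum = 0} := by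
    refine Nat.card_congr (Equiv.subtypeEquivRight fun u => ?_)
    simp only [List.map_cons, suffixSumsNonneg_cons, step, Matrix.cons_val]
    constructor
    · rintro ⟨hl, hs, hpos⟩
      exact ⟨⟨hl, hs⟩, by omega⟩
    · rintro ⟨⟨hl, hs⟩, hne⟩
      exact ⟨hl, hs, by have := hs.sum_nonneg; omega⟩
  have hup (i : Fin 3) (hi : step i = 1) : Nat.card {u : List (Fin 3) // u.length = n ∧
      SuffixSumsNonneg ((i :: u).map step)} = count n := by
    refine Nat.card_congr (Equiv.subtypeEquivRight fun u => ?_)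
    simp only [List.map_cons, suffixSumsNonneg_cons, hi]
    exact and_congr_right fun _ => and_iff_left_of_imp fun hs => by linarith [hs.sum_nonneg]
  have hsplit : count n = countAt n 0 + Nat.card {u : List (Fin 3) //
      (u.length = n ∧ SuffixSumsNonneg (u.map step)) ∧ ¬(u.map step).sum = 0} := by
    rw [count, Nat.card_subtype_eq_card_and_add_card_and_not _ fun u => (u.map step).sum = 0,
      countAt]
    simp only [and_assoc]
  rw [count, Nat.card_length_succ_and, Fin.sum_univ_three, hdown, hup 1 rfl, hup 2 rfl, hsplit]
  ring

/-- The weighted ballot numbers: a walk of length `n` with `m` up steps ends at height `2m - n`,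
and each up step can come from two N-steps. -/
theorem countAt_two_mul_sub (n m : ℕ) (hnm : n ≤ 2 * m + 1) :
    (countAt n (2 * m - n) : ℤ) = 2 ^ m * ((n.choose m : ℤ) - n.choose (m + 1)) := by
  induction n generalizing m with
  | zero =>
    rw [countAt_zero]
    rcases m with _ | m
    · simp
    · rw [if_neg (by omega)]
      simp
  | succ n ih =>
    rcases Nat.lt_or_ge n (2 * m) with hn | hn
    · obtain ⟨m, rfl⟩ : ∃ m', m = m' + 1 := ⟨m - 1, by omega⟩
      rw [countAt_succ n (by omega)]
      push_cast
      rw [show (2 * (m + 1) - (n + 1) + 1 : ℤ) = 2 * (m + 1 : ℕ) - n by push_cast; ring,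
        show (2 * (m + 1) - (n + 1) - 1 : ℤ) = 2 * m - n by ring, ih (m + 1) (by omega),
        ih m (by omega), Nat.choose_succ_succ, Nat.choose_succ_succ n (m + 1)]
      push_cast
      ring
    · obtain rfl : n = 2 * m := by omega
      rw [countAt_eq_zero_of_neg (by push_cast; omega), Nat.choose_symm_half]
      simp

theorem countAt_two_mul_zero (k : ℕ) : countAt (2 * k) 0 = 2 ^ k * catalan k := by
  have h := countAt_two_mul_sub (2 * k) k (by omega)
  push_cast at h
  rw [sub_self, ← catalan_eq_choose_sub_choose] at h
  exact_mod_cast h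

theorem countAt_two_mul_add_one_zero (k : ℕ) : countAt (2 * k + 1) 0 = 0 :=
  countAt_eq_zero_of_odd ⟨k, by push_cast; ring⟩

theorem count_le_three_pow (n : ℕ) : count n ≤ 3 ^ n := by
  induction n with
  | zero => rw [count_zero, pow_zero]
  | succ n ih => have := count_succ n; rw [pow_succ]; omega

theorem hasSum_countAt_zero {t : ℝ} (ht0 : 0 < t) (ht : 8 * t ^ 2 ≤ 1) :
    HasSum (fun n => (countAt n 0 : ℝ) * t ^ n) (catalanGF (2 * t ^ 2)) := by
  have hinj : Function.Injective (2 * ·) := mul_right_injective₀ two_ne_zero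
  refine (hinj.hasSum_iff fun n hn => ?_).1 ?_
  · obtain ⟨k, rfl⟩ : Odd n :=
      (Nat.even_or_odd n).resolve_left fun ⟨k, hk⟩ => hn ⟨k, show 2 * k = n by omega⟩
    simp [countAt_two_mul_add_one_zero]
  · convert hasSum_catalan_mul_pow (x := 2 * t ^ 2) (by positivity) (by linarith) using 2 with k
    simp only [Function.comp_apply, countAt_two_mul_zero]
    push_cast
    ring

theorem hasSum_count {t : ℝ} (ht0 : 0 < t) (ht : t < 1 / 3) :
    HasSum (fun n => (count n : ℝ) * t ^ n) ((1 - t * catalanGF (2 * t ^ 2)) / (1 - 3 * t)) := by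
  have hrec (n : ℕ) : (count (n + 1) : ℝ) = 3 * count n - countAt n 0 := by
    have := count_succ n
    rw [eq_sub_iff_add_eq]
    exact_mod_cast this
  have hsum : Summable fun n => (count n : ℝ) * t ^ n := by
    refine .of_nonneg_of_le (fun n => by positivity) (fun n => ?_)
      (summable_geometric_of_lt_one (by positivity) (by linarith : 3 * t < 1))
    rw [mul_pow]
    gcongr
    exact_mod_cast count_le_three_pow n
  have h := HasSum.of_succ_eq_mul_sub hrec hsum (hasSum_countAt_zero ht0 (by nlinarith))
    (by linarith)
  rwa [count_zero, Nat.cast_one] at h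

end DyckMeander

/-- with all weights 1, D⁺(1,1;t) = -(1 - 4t - √(1-8t²)) / (4t(1-3t)),
with expansion 1 + 2t + 6t² + 16t³ + 48t⁴ + ⋯ . -/
theorem dyck_meander_gf :
    dyckMeanderCount 0 = 1 ∧ dyckMeanderCount 1 = 2 ∧ dyckMeanderCount 2 = 6 ∧
    dyckMeanderCount 3 = 16 ∧ dyckMeanderCount 4 = 48 ∧
    ∀ t : ℝ, 0 < t → t < 1 / 3 →
      HasSum (fun n : ℕ => (dyckMeanderCount n : ℝ) * t ^ n)
        (-(1 - 4 * t - Real.sqrt (1 - 8 * t ^ 2)) / (4 * t * (1 - 3 * t))) := by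
  open DyckMeander in
  simp only [dyckMeanderCount_eq_count]
  have h0 := count_zero
  have h1 := count_succ 0
  have h2 := count_succ 1
  have h3 := count_succ 2
  have h4 := count_succ 3
  have e0 := countAt_two_mul_zero 0
  have e1 := countAt_two_mul_add_one_zero 0
  have e2 := countAt_two_mul_zero 1
  have e3 := countAt_two_mul_add_one_zero 1
  norm_num [catalan_one] at h1 h2 h3 h4 e0 e1 e2 e3
  refine ⟨h0, by omega, by omega, by omega, by omega, fun t ht0 ht => ?_⟩
  convert hasSum_count ht0 ht using 1
  rw [catalanGF, show (1 : ℝ) - 4 * (2 * t ^ 2) = 1 - 8 * t ^ 2 by ring]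
  field_simp
  ring
end

section
/- The weighted generating function D^+(0,1;t) of Dyck N-excursions is symmetric under exchanging the weights p_{-1} and p_{1}. -/
open Classical in
/-- Total weight (with N-step weights p) of Dyck N-excursions of length n;
when p is a probability distribution this is the probability that a random
Dyck N-walk of length n is an N-excursion. -/
noncomputable def wExc (p : Fin 3 → ℝ) (n : ℕ) : ℝ :=
  ∑ f : Fin n → Fin 3,
    if IsNExcursion (List.ofFn fun k => dstep (f k)) then ∏ k, p (f k) else 0

private lemma swap01_0 : (Equiv.swap 0 1 : Equiv.Perm (Fin 3)) 0 = 1 := by decide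
private lemma swap01_1 : (Equiv.swap 0 1 : Equiv.Perm (Fin 3)) 1 = 0 := by decide
private lemma swap01_2 : (Equiv.swap 0 1 : Equiv.Perm (Fin 3)) 2 = 2 := by decide

private lemma neg_sum_list : ∀ l : List ℤ, (l.map (fun x => -x)).sum = -l.sum
  | [] => by simp
  | a :: l => by simp [neg_sum_list l]; ring

private lemma mem_dstep_neg {x : ℤ} {i : Fin 3} (h : x ∈ dstep i) :
    -x ∈ dstep (Equiv.swap 0 1 i) := by
  have hi : i = 0 ∨ i = 1 ∨ i = 2 := by omega
  rcases hi with rfl | rfl | rfl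
  · rw [swap01_0]; simp [dstep] at h ⊢; omega
  · rw [swap01_1]; simp [dstep] at h ⊢; omega
  · rw [swap01_2]; simp [dstep] at h ⊢; omega

private lemma exc_transform {n : ℕ} (f : Fin n → Fin 3)
    (h : IsNExcursion (List.ofFn fun k => dstep (f k))) :
    IsNExcursion (List.ofFn fun k => dstep (Equiv.swap 0 1 (f (Fin.rev k)))) := by
  obtain ⟨v, hc, hm, hs⟩ := h
  rw [Compatible, List.forall₂_iff_get] at hc
  obtain ⟨hlen, hget⟩ := hc
  have hvn : v.length = n := by simpa using hlen
  refine ⟨(v.map (fun x => -x)).reverse, ?_, ?_, ?_⟩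
  · rw [Compatible, List.forall₂_iff_get]
    refine ⟨by simp [hvn], fun i h₁ h₂ => ?_⟩
    have hi : i < n := by simpa [hvn] using h₁
    have h3 : n - 1 - i < v.length := by omega
    have e1 : (v.map (fun x => -x)).reverse.get ⟨i, h₁⟩ = -(v.get ⟨n - 1 - i, h3⟩) := by
      simp [List.get_eq_getElem, List.getElem_reverse, hvn]
    have e2 : (List.ofFn fun k => dstep (Equiv.swap 0 1 (f (Fin.rev k)))).get ⟨i, h₂⟩
        = dstep (Equiv.swap 0 1 (f (Fin.rev ⟨i, hi⟩))) := by
      simp [List.get_ofFn]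
    rw [e1, e2]
    have h4 : n - 1 - i < (List.ofFn fun k => dstep (f k)).length := by
      rw [List.length_ofFn]; omega
    have hmem := hget (n - 1 - i) h3 h4
    have e3 : (List.ofFn fun k => dstep (f k)).get ⟨n - 1 - i, h4⟩
        = dstep (f ⟨n - 1 - i, by omega⟩) := by simp [List.get_ofFn]
    rw [e3] at hmem
    have e4 : Fin.rev ⟨i, hi⟩ = (⟨n - 1 - i, by omega⟩ : Fin n) := by
      ext; simp [Fin.rev]; omega
    rw [e4]
    exact mem_dstep_neg hmem
  · intro m
    rw [List.take_reverse]
    have h0 : (0:ℤ) ≤ (List.take (v.length - m) v).sum := hm _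
    have hd : (List.take (v.length - m) v).sum + (List.drop (v.length - m) v).sum = v.sum :=
      List.sum_take_add_sum_drop v _
    rw [List.sum_reverse, List.length_map, ← List.map_drop, neg_sum_list]
    omega
  · rw [List.sum_reverse, neg_sum_list, hs, neg_zero]


private lemma swap01_vec (pm pp pb : ℝ) (i : Fin 3) :
    (![pp, pm, pb] : Fin 3 → ℝ) (Equiv.swap 0 1 i) = ![pm, pp, pb] i := by
  have hi : i = 0 ∨ i = 1 ∨ i = 2 := by omega
  rcases hi with rfl | rfl | rfl
  · rw [swap01_0]; rfl
  · rw [swap01_1]; rfl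
  · rw [swap01_2]; rfl

private lemma T_invol (n : ℕ) :
    Function.Involutive (fun f : Fin n → Fin 3 => fun k => Equiv.swap 0 1 (f (Fin.rev k))) := by
  intro f
  funext k
  simp [Fin.rev_rev, Equiv.swap_apply_self]

/-- the weighted generating function of Dyck N-excursions is symmetric
under exchanging the weights p₋₁ and p₁ (coefficientwise in t). -/
theorem dyck_excursion_weight_symmetry (pm pp pb : ℝ) (n : ℕ) :
    wExc ![pm, pp, pb] n = wExc ![pp, pm, pb] n := by
  classical
  unfold wExc
  refine Fintype.sum_bijective (fun f : Fin n → Fin 3 => fun k => Equiv.swap 0 1 (f (Fin.rev k)))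
    (T_invol n).bijective _ _ (fun f => ?_)
  have hiff : IsNExcursion (List.ofFn fun k => dstep (f k)) ↔
      IsNExcursion (List.ofFn fun k => dstep (Equiv.swap 0 1 (f (Fin.rev k)))) := by
    constructor
    · exact exc_transform f
    · intro h
      have := exc_transform _ h
      simpa [Fin.rev_rev, Equiv.swap_apply_self] using this
  have hprod : (∏ k, (![pm, pp, pb] : Fin 3 → ℝ) (f k))
      = ∏ k, (![pp, pm, pb] : Fin 3 → ℝ) (Equiv.swap 0 1 (f (Fin.rev k))) := by
    simp only [swap01_vec]
    exact (Fintype.prod_bijective Fin.rev Fin.rev_involutive.bijective _ _ (fun k => rfl)).symm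
  by_cases h : IsNExcursion (List.ofFn fun k => dstep (f k))
  · rw [if_pos h, if_pos (hiff.mp h), hprod]
  · rw [if_neg h, if_neg (fun hh => h (hiff.mpr hh))]
end

section
/- With all weights equal to 1, the generating function of Dyck N-bridges equals B(1,1;t) = (1-6t^2) / (sqrt(1-8t^2)(1-9t^2)), with series expansion 1 + 7t^2 + 63t^4 + 583t^6 + 5407t^8 + ... -/
/-- Number of Dyck N-bridges of length n. -/
noncomputable def dyckBridgeCount (n : ℕ) : ℕ :=
  Nat.card {w : List (Finset ℤ) // w.length = n ∧ IsDyckNWalk w ∧ IsNBridge w}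

/-!
A Dyck N-walk of length `n` is a word in the three steps `{-1}`, `{1}`, `{-1, 1}`. Its reachable
endpoints are exactly the integers of the parity of `n` between `2 #{1} - n` and `n - 2 #{-1}`, so
a word of length `2m` is a bridge iff neither `{-1}` nor `{1}` occurs more than `m` times. These
two events are disjoint, and each happens for `h_m = ∑_{k<m} C(2m, k) 2^k` of the `9^m` words, so
`b_m = 9^m - 2 h_m`. Two applications of Pascal's rule give
`b_{m+1} = 9 b_m + s_{m+1} - 6 s_m` with `s_m = 2^m C(2m, m)`, and the binomial series gives
`∑ s_m u^m = (1 - 8u)^(-1/2)`. Therefore `(1 - 9u) ∑ b_m u^m = (1 - 6u) / √(1 - 8u)`; put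
`u = t²`, odd lengths contributing nothing.
-/

open Finset

theorem mem_reach_nil {r : ℤ} : r ∈ reach [] ↔ r = 0 := by
  simp [reach, Compatible, eq_comm]

theorem mem_reach_cons {s : Finset ℤ} {w : List (Finset ℤ)} {r : ℤ} :
    r ∈ reach (s :: w) ↔ ∃ x ∈ s, r - x ∈ reach w := by
  simp only [reach, Compatible, Set.mem_ofPred_eq, List.forall₂_cons_right_iff]
  constructor
  · rintro ⟨_, ⟨x, v, hx, hv, rfl⟩, rfl⟩
    exact ⟨x, hx, v, hv, by simp⟩
  · rintro ⟨x, hx, v, hv, hsum⟩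
    exact ⟨x :: v, ⟨x, v, hx, hv, rfl⟩, by simp [hsum]⟩

theorem isDyckNWalk_cons {s : Finset ℤ} {w : List (Finset ℤ)} :
    IsDyckNWalk (s :: w) ↔ (s = {-1} ∨ s = {1} ∨ s = {-1, 1}) ∧ IsDyckNWalk w :=
  List.forall_mem_cons

@[simp] theorem pair_neg_one_one_ne_singleton_neg_one : ({-1, 1} : Finset ℤ) ≠ {-1} := by decide

def dyckLow (w : List (Finset ℤ)) : ℤ := (w.map fun s ↦ if s = {1} then 1 else -1).sum

def dyckHigh (w : List (Finset ℤ)) : ℤ := (w.map fun s ↦ if s = {-1} then -1 else 1).sum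

@[simp] theorem dyckLow_nil : dyckLow [] = 0 := rfl
@[simp] theorem dyckHigh_nil : dyckHigh [] = 0 := rfl

@[simp] theorem dyckLow_cons (s : Finset ℤ) (w : List (Finset ℤ)) :
    dyckLow (s :: w) = (if s = {1} then 1 else -1) + dyckLow w := by
  simp [dyckLow]

@[simp] theorem dyckHigh_cons (s : Finset ℤ) (w : List (Finset ℤ)) :
    dyckHigh (s :: w) = (if s = {-1} then -1 else 1) + dyckHigh w := by
  simp [dyckHigh]

theorem IsDyckNWalk.dyckLow_le_dyckHigh {w : List (Finset ℤ)} (hw : IsDyckNWalk w) :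
    dyckLow w ≤ dyckHigh w := by
  induction w with
  | nil => simp
  | cons s w ih =>
    obtain ⟨hs, hw⟩ := isDyckNWalk_cons.1 hw
    have := ih hw
    rcases hs with rfl | rfl | rfl <;> simp <;> omega

theorem IsDyckNWalk.even_dyckLow_add_length {w : List (Finset ℤ)} (hw : IsDyckNWalk w) :
    Even (dyckLow w + w.length) := by
  induction w with
  | nil => simp
  | cons s w ih =>
    obtain ⟨hs, hw⟩ := isDyckNWalk_cons.1 hw
    have := ih hw
    rw [Int.even_iff] at this ⊢
    rcases hs with rfl | rfl | rfl <;> simp <;> omega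

theorem IsDyckNWalk.mem_reach_iff {w : List (Finset ℤ)} (hw : IsDyckNWalk w) {r : ℤ} :
    r ∈ reach w ↔ dyckLow w ≤ r ∧ r ≤ dyckHigh w ∧ Even (r + w.length) := by
  induction w generalizing r with
  | nil =>
    simp only [mem_reach_nil, dyckLow_nil, dyckHigh_nil, List.length_nil, Int.even_iff]
    omega
  | cons s w ih =>
    obtain ⟨hs, hw⟩ := isDyckNWalk_cons.1 hw
    have hle := hw.dyckLow_le_dyckHigh
    have hpar := hw.even_dyckLow_add_length
    simp only [mem_reach_cons, ih hw, Int.even_iff] at hpar ⊢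
    rcases hs with rfl | rfl | rfl <;> simp <;> omega

theorem IsDyckNWalk.isNBridge_iff {w : List (Finset ℤ)} (hw : IsDyckNWalk w) :
    IsNBridge w ↔ dyckLow w ≤ 0 ∧ 0 ≤ dyckHigh w ∧ Even w.length := by
  show 0 ∈ reach w ↔ _
  simpa using hw.mem_reach_iff (r := 0)

theorem sum_ite_eq_two_mul_card_sub {ι α : Type*} [Fintype ι] [DecidableEq α] (f : ι → α)
    (a : α) : ∑ i, (if f i = a then (1 : ℤ) else -1) = 2 * #{i | f i = a} - Fintype.card ι := by
  have h : (Fintype.card ι : ℤ) = #{i | f i = a} + #{i | ¬f i = a} := by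
    exact_mod_cast (card_filter_add_card_filter_not (s := univ) fun i ↦ f i = a).symm
  rw [Finset.sum_ite, sum_const, sum_const, h]
  simp only [Int.nsmul_eq_mul, mul_one, mul_neg]
  ring

theorem card_filter_eq_add_card_filter_eq_le {ι α : Type*} [Fintype ι] [DecidableEq α]
    {a b : α} (hab : a ≠ b) (f : ι → α) :
    #{i | f i = a} + #{i | f i = b} ≤ Fintype.card ι := by
  classical
  rw [← card_union_of_disjoint (disjoint_filter.2 fun i _ ha hb ↦ hab (ha.symm.trans hb))]
  exact card_le_univ _

section WordCount

variable {ι α : Type*} [Fintype ι] [DecidableEq ι] [Fintype α] [DecidableEq α]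

theorem card_filter_support_eq (a : α) (s : Finset ι) :
    #{f : ι → α | ({i | f i ≠ a} : Finset ι) = s} = (Fintype.card α - 1) ^ #s := by
  have h : ({f : ι → α | ({i | f i ≠ a} : Finset ι) = s} : Finset (ι → α)) =
      Fintype.piFinset fun i ↦ if i ∈ s then univ.erase a else {a} := by
    ext f
    simp only [mem_filter, mem_univ, true_and, Fintype.mem_piFinset, Finset.ext_iff]
    refine forall_congr' fun i ↦ ?_
    split_ifs with hi <;> simp [hi]
  rw [h, Fintype.card_piFinset]
  simp [apply_ite card, prod_ite_mem]

theorem card_filter_card_support_eq (a : α) (k : ℕ) :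
    #{f : ι → α | #{i | f i ≠ a} = k} = (Fintype.card ι).choose k * (Fintype.card α - 1) ^ k := by
  rw [card_eq_sum_card_fiberwise (f := fun f : ι → α ↦ ({i | f i ≠ a} : Finset ι))
    (t := powersetCard k univ) (by intro f hf; simpa using hf)]
  rw [sum_congr rfl fun s hs ↦ ?_, sum_const, card_powersetCard, card_univ, smul_eq_mul]
  rw [mem_powersetCard_univ] at hs
  rw [← hs, ← card_filter_support_eq a s, filter_filter]
  congr 1
  exact filter_congr fun f _ ↦ ⟨fun h ↦ h.2, fun h ↦ ⟨h ▸ rfl, h⟩⟩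

theorem card_filter_lt_card_eq {m : ℕ} (hι : Fintype.card ι = 2 * m) (a : α) :
    #{f : ι → α | m < #{i | f i = a}} =
      ∑ k ∈ range m, (2 * m).choose k * (Fintype.card α - 1) ^ k := by
  have h (f : ι → α) : m < #{i | f i = a} ↔ #{i | f i ≠ a} < m := by
    have := card_filter_add_card_filter_not (s := univ) (fun i ↦ f i = a)
    rw [card_univ, hι] at this
    simp only [← ne_eq] at this
    omega
  simp only [h]
  rw [card_eq_sum_card_fiberwise (f := fun f : ι → α ↦ #{i | f i ≠ a}) (t := range m)
    (by intro f hf; simpa using hf)]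
  refine sum_congr rfl fun k hk ↦ ?_
  rw [← hι, ← card_filter_card_support_eq a k, filter_filter]
  congr 1
  exact filter_congr fun f _ ↦ ⟨fun h ↦ h.2, fun h ↦ ⟨h ▸ mem_range.1 hk, h⟩⟩

theorem card_filter_le_and_le_add {m : ℕ} (hι : Fintype.card ι = 2 * m) {a b : α} (hab : a ≠ b) :
    #{f : ι → α | #{i | f i = a} ≤ m ∧ #{i | f i = b} ≤ m} +
      2 * ∑ k ∈ range m, (2 * m).choose k * (Fintype.card α - 1) ^ k =
      Fintype.card α ^ (2 * m) := by
  have hdisj : Disjoint (α := Finset (ι → α))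
      {f | m < #{i | f i = a}} {f | m < #{i | f i = b}} := by
    refine disjoint_filter.2 fun f _ ha hb ↦ ?_
    have := card_filter_eq_add_card_filter_eq_le hab f
    omega
  have htotal := card_filter_add_card_filter_not (s := (univ : Finset (ι → α)))
    fun f ↦ #{i | f i = a} ≤ m ∧ #{i | f i = b} ≤ m
  simp only [not_and_or, not_le, filter_or, card_union_of_disjoint hdisj,
    card_filter_lt_card_eq hι, card_univ, Fintype.card_fun, hι] at htotal
  omega

end WordCount

def dyckStep : Fin 3 → Finset ℤ := ![{-1}, {1}, {-1, 1}]

theorem dyckStep_injective : Function.Injective dyckStep := by decide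

theorem isDyckNWalk_ofFn_dyckStep {n : ℕ} (f : Fin n → Fin 3) :
    IsDyckNWalk (List.ofFn fun i ↦ dyckStep (f i)) := by
  have h : ∀ j, dyckStep j = {-1} ∨ dyckStep j = {1} ∨ dyckStep j = {-1, 1} := by decide
  simpa [IsDyckNWalk] using fun i ↦ h (f i)

theorem IsDyckNWalk.exists_ofFn_dyckStep {w : List (Finset ℤ)} (hw : IsDyckNWalk w) :
    ∃ f : Fin w.length → Fin 3, List.ofFn (fun i ↦ dyckStep (f i)) = w := by
  have h (i : Fin w.length) : ∃ j, dyckStep j = w[i] := by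
    rcases hw _ (List.getElem_mem i.2) with h | h | h
    exacts [⟨0, h.symm⟩, ⟨1, h.symm⟩, ⟨2, h.symm⟩]
  choose f hf using h
  exact ⟨f, by simp only [hf]; exact List.ofFn_getElem⟩

theorem dyckLow_ofFn_dyckStep {n : ℕ} (f : Fin n → Fin 3) :
    dyckLow (List.ofFn fun i ↦ dyckStep (f i)) = 2 * #{i | f i = 1} - n := by
  have h : ∀ j, (if dyckStep j = {1} then 1 else -1 : ℤ) = if j = 1 then 1 else -1 := by decide
  simp [dyckLow, List.sum_ofFn, h, sum_ite_eq_two_mul_card_sub]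

theorem dyckHigh_ofFn_dyckStep {n : ℕ} (f : Fin n → Fin 3) :
    dyckHigh (List.ofFn fun i ↦ dyckStep (f i)) = n - 2 * #{i | f i = 0} := by
  have h : ∀ j, (if dyckStep j = {-1} then -1 else 1 : ℤ) = -if j = 0 then 1 else -1 := by decide
  simp [dyckHigh, List.sum_ofFn, h, sum_ite_eq_two_mul_card_sub]

theorem natCard_dyckNWalk_eq_card_filter (n : ℕ) (P : List (Finset ℤ) → Prop)
    [DecidablePred P] :
    Nat.card {w : List (Finset ℤ) // w.length = n ∧ IsDyckNWalk w ∧ P w} =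
      #{f : Fin n → Fin 3 | P (List.ofFn fun i ↦ dyckStep (f i))} := by
  rw [← Fintype.card_subtype, ← Nat.card_eq_fintype_card]
  symm
  refine Nat.card_eq_of_bijective
    (fun f ↦ ⟨List.ofFn fun i ↦ dyckStep (f.1 i), by simp, isDyckNWalk_ofFn_dyckStep f.1, f.2⟩)
    ⟨fun f g hfg ↦ ?_, ?_⟩
  · have := List.ofFn_injective (Subtype.mk.inj hfg)
    exact Subtype.ext (dyckStep_injective.comp_left this)
  · rintro ⟨w, rfl, hw, hP⟩
    obtain ⟨f, hf⟩ := hw.exists_ofFn_dyckStep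
    exact ⟨⟨f, hf.symm ▸ hP⟩, Subtype.ext hf⟩

theorem dyckBridgeCount_of_not_even {n : ℕ} (hn : ¬Even n) : dyckBridgeCount n = 0 :=
  Nat.card_eq_zero.2 <| .inl ⟨fun ⟨_, hlen, hw, hb⟩ ↦ hn (hlen ▸ (hw.isNBridge_iff.1 hb).2.2)⟩

def majorityCount (m : ℕ) : ℕ := ∑ k ∈ range m, (2 * m).choose k * 2 ^ k

theorem dyckBridgeCount_two_mul_add (m : ℕ) :
    dyckBridgeCount (2 * m) + 2 * majorityCount m = 9 ^ m := by
  classical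
  have hbridge (f : Fin (2 * m) → Fin 3) : IsNBridge (List.ofFn fun i ↦ dyckStep (f i)) ↔
      #{i | f i = 1} ≤ m ∧ #{i | f i = 0} ≤ m := by
    rw [(isDyckNWalk_ofFn_dyckStep f).isNBridge_iff, dyckLow_ofFn_dyckStep,
      dyckHigh_ofFn_dyckStep]
    simp only [List.length_ofFn, even_two_mul, and_true]
    omega
  rw [dyckBridgeCount, natCard_dyckNWalk_eq_card_filter, filter_congr fun f _ ↦ hbridge f]
  simpa [majorityCount, pow_mul] using
    card_filter_le_and_le_add (Fintype.card_fin (2 * m)) (by decide : (1 : Fin 3) ≠ 0)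

theorem dyckBridgeCount_two_mul (m : ℕ) : dyckBridgeCount (2 * m) = 9 ^ m - 2 * majorityCount m :=
  Nat.eq_sub_of_add_eq (dyckBridgeCount_two_mul_add m)

theorem sum_range_succ_choose_succ_mul_pow {R : Type*} [CommSemiring R] (x : R) (N k : ℕ) :
    ∑ b ∈ range (k + 1), ((N + 1).choose b : R) * x ^ b =
      ∑ b ∈ range (k + 1), (N.choose b : R) * x ^ b +
        x * ∑ b ∈ range k, (N.choose b : R) * x ^ b := by
  rw [sum_range_succ', sum_range_succ' (fun b ↦ (N.choose b : R) * x ^ b), mul_sum]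
  simp only [Nat.choose_succ_succ', Nat.cast_add, add_mul, sum_add_distrib, Nat.choose_zero_right]
  have h (b : ℕ) : (N.choose b : R) * x ^ (b + 1) = x * ((N.choose b : R) * x ^ b) := by ring
  simp only [h]
  abel

theorem centralBinom_succ_eq_two_mul_choose (m : ℕ) :
    (m + 1).centralBinom = 2 * (2 * m + 1).choose m := by
  rw [Nat.centralBinom_eq_two_mul_choose, show 2 * (m + 1) = 2 * m + 1 + 1 by ring,
    Nat.choose_succ_succ', Nat.choose_symm_half]
  ring

theorem majorityCount_succ (m : ℕ) :
    majorityCount (m + 1) + 2 ^ m * (m + 1).centralBinom =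
      9 * majorityCount m + 3 * 2 ^ m * m.centralBinom := by
  have h₁ := sum_range_succ_choose_succ_mul_pow (2 : ℕ) (2 * m + 1) m
  have h₂ := sum_range_succ_choose_succ_mul_pow (2 : ℕ) (2 * m) m
  have h₃ := sum_range_succ (fun b ↦ (2 * m).choose b * 2 ^ b) m
  have h₄ := sum_range_succ (fun b ↦ (2 * m + 1).choose b * 2 ^ b) m
  simp only [Nat.cast_id] at h₁ h₂
  rw [majorityCount, majorityCount, show 2 * (m + 1) = 2 * m + 1 + 1 by ring, h₁,
    centralBinom_succ_eq_two_mul_choose, Nat.centralBinom_eq_two_mul_choose]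
  linarith

theorem dyckBridgeCount_two_mul_succ (m : ℕ) :
    (dyckBridgeCount (2 * (m + 1)) : ℝ) = 9 * dyckBridgeCount (2 * m) +
      2 ^ (m + 1) * (m + 1).centralBinom - 6 * (2 ^ m * m.centralBinom) := by
  have h₁ := dyckBridgeCount_two_mul_add m
  have h₂ := dyckBridgeCount_two_mul_add (m + 1)
  have h₃ := majorityCount_succ m
  simp only [← @Nat.cast_inj ℝ, Nat.cast_add, Nat.cast_mul, Nat.cast_pow, Nat.cast_ofNat]
    at h₁ h₂ h₃
  linear_combination h₂ - 9 * h₁ - 2 * h₃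

open Polynomial in
theorem four_pow_mul_ascPochhammer_eval_one_half (n : ℕ) :
    4 ^ n * (ascPochhammer ℝ n).eval (1 / 2) = n.factorial * n.centralBinom := by
  induction n with
  | zero => simp
  | succ n ih =>
    have h : ((n + 1 : ℕ) : ℝ) * (n + 1).centralBinom = 2 * (2 * n + 1) * n.centralBinom := by
      exact_mod_cast Nat.succ_mul_centralBinom_succ n
    rw [ascPochhammer_succ_eval, Nat.factorial_succ, pow_succ]
    push_cast at h ⊢
    linear_combination (2 * n + 1) * 2 * ih - (n.factorial : ℝ) * h

open Polynomial in
theorem multichoose_one_half (n : ℕ) :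
    Ring.multichoose (1 / 2 : ℝ) n = n.centralBinom / 4 ^ n := by
  have h := Ring.factorial_nsmul_multichoose_eq_ascPochhammer (1 / 2 : ℝ) n
  rw [ascPochhammer_smeval_eq_eval, nsmul_eq_mul] at h
  have hfact : (n.factorial : ℝ) ≠ 0 := Nat.cast_ne_zero.2 n.factorial_ne_zero
  rw [eq_div_iff (by positivity), ← mul_right_inj' hfact]
  linear_combination 4 ^ n * h + four_pow_mul_ascPochhammer_eval_one_half n

theorem hasSum_centralBinom_mul_pow {x : ℝ} (hx : |x| < 1 / 4) :
    HasSum (fun n ↦ (n.centralBinom : ℝ) * x ^ n) (1 / √(1 - 4 * x)) := by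
  have h4x : 4 * x ∈ Metric.eball (0 : ℝ) 1 := by
    rw [← ENNReal.coe_one, Metric.eball_coe, Metric.mem_ball, dist_zero_right, Real.norm_eq_abs,
      abs_mul]
    norm_num
    linarith
  have h := (Real.one_div_one_sub_rpow_hasFPowerSeriesOnBall_zero (1 / 2)).hasSum h4x
  simp only [FormalMultilinearSeries.ofScalars_apply_eq, zero_add, ← Ring.multichoose_eq,
    multichoose_one_half, smul_eq_mul, mul_pow] at h
  rw [Real.sqrt_eq_rpow]
  have e (n : ℕ) : (n.centralBinom : ℝ) / 4 ^ n * (4 ^ n * x ^ n) = n.centralBinom * x ^ n := by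
    field_simp
  simpa only [e] using h

theorem one_sub_mul_eq_of_hasSum_of_succ_eq {a c : ℕ → ℝ} {p q x A C : ℝ}
    (ha : HasSum (fun n ↦ a n * x ^ n) A) (hc : HasSum (fun n ↦ c n * x ^ n) C)
    (h0 : a 0 = c 0) (hsucc : ∀ n, a (n + 1) = p * a n + c (n + 1) - q * c n) :
    (1 - p * x) * A = (1 - q * x) * C := by
  have ha' := (hasSum_nat_add_iff' 1).2 ha
  have hc' := (hasSum_nat_add_iff' 1).2 hc
  simp only [Finset.range_one, Finset.sum_singleton, pow_zero, mul_one] at ha' hc'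
  have h := ((ha.mul_left (p * x)).add hc').sub (hc.mul_left (q * x))
  have e (n : ℕ) : p * x * (a n * x ^ n) + c (n + 1) * x ^ (n + 1) - q * x * (c n * x ^ n) =
      a (n + 1) * x ^ (n + 1) := by
    rw [hsucc]; ring
  simp only [e] at h
  linear_combination ha'.unique h + h0

theorem hasSum_dyckBridgeCount_two_mul {u : ℝ} (hu₀ : 0 ≤ u) (hu : 9 * u < 1) :
    HasSum (fun m ↦ (dyckBridgeCount (2 * m) : ℝ) * u ^ m)
      ((1 - 6 * u) / (√(1 - 8 * u) * (1 - 9 * u))) := by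
  have hs : HasSum (fun m ↦ (2 ^ m * m.centralBinom : ℝ) * u ^ m) (1 / √(1 - 8 * u)) := by
    have h := hasSum_centralBinom_mul_pow (x := 2 * u)
      (by rw [abs_of_nonneg (by positivity)]; linarith)
    have e (m : ℕ) : (2 ^ m * m.centralBinom : ℝ) * u ^ m = m.centralBinom * (2 * u) ^ m := by ring
    rw [show 1 - 8 * u = 1 - 4 * (2 * u) by ring]
    simpa only [e] using h
  have hb : Summable fun m ↦ (dyckBridgeCount (2 * m) : ℝ) * u ^ m := by
    refine .of_nonneg_of_le (fun m ↦ by positivity) (fun m ↦ ?_)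
      (summable_geometric_of_lt_one (by positivity) hu)
    have : (dyckBridgeCount (2 * m) : ℝ) ≤ 9 ^ m := by
      exact_mod_cast (Nat.le_add_right _ _).trans (dyckBridgeCount_two_mul_add m).le
    rw [mul_pow]
    gcongr
  have h₀ : (dyckBridgeCount (2 * 0) : ℝ) = 2 ^ 0 * (0 : ℕ).centralBinom := by
    simpa [majorityCount] using dyckBridgeCount_two_mul_add 0
  have key := one_sub_mul_eq_of_hasSum_of_succ_eq hb.hasSum hs h₀ dyckBridgeCount_two_mul_succ
  have h8 : 0 < √(1 - 8 * u) := Real.sqrt_pos.2 (by linarith)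
  rw [mul_one_div, eq_div_iff h8.ne'] at key
  convert hb.hasSum using 1
  rw [div_eq_iff (by positivity)]
  linear_combination -key

/-- with all weights 1, B(1,1;t) = (1-6t²)/(√(1-8t²)(1-9t²)),
with expansion 1 + 7t² + 63t⁴ + 583t⁶ + 5407t⁸ + ⋯ . -/
theorem dyck_bridge_gf :
    dyckBridgeCount 0 = 1 ∧ dyckBridgeCount 2 = 7 ∧ dyckBridgeCount 4 = 63 ∧
    dyckBridgeCount 6 = 583 ∧ dyckBridgeCount 8 = 5407 ∧
    ∀ t : ℝ, |t| < 1 / 3 →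
      HasSum (fun n : ℕ => (dyckBridgeCount n : ℝ) * t ^ n)
        ((1 - 6 * t ^ 2) / (Real.sqrt (1 - 8 * t ^ 2) * (1 - 9 * t ^ 2))) := by
  refine ⟨?_, ?_, ?_, ?_, ?_, fun t ht ↦ ?_⟩
  · simpa using (dyckBridgeCount_two_mul 0).trans (by decide : 9 ^ 0 - 2 * majorityCount 0 = 1)
  · simpa using (dyckBridgeCount_two_mul 1).trans (by decide : 9 ^ 1 - 2 * majorityCount 1 = 7)
  · simpa using (dyckBridgeCount_two_mul 2).trans (by decide : 9 ^ 2 - 2 * majorityCount 2 = 63)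
  · simpa using (dyckBridgeCount_two_mul 3).trans (by decide : 9 ^ 3 - 2 * majorityCount 3 = 583)
  · simpa using (dyckBridgeCount_two_mul 4).trans (by decide : 9 ^ 4 - 2 * majorityCount 4 = 5407)
  have ht2 : 9 * t ^ 2 < 1 := by
    have := sq_lt_sq' (abs_lt.1 ht).1 (abs_lt.1 ht).2
    linarith
  have heven := hasSum_dyckBridgeCount_two_mul (sq_nonneg t) ht2
  simp only [← pow_mul] at heven
  have hodd : HasSum (fun k ↦ (dyckBridgeCount (2 * k + 1) : ℝ) * t ^ (2 * k + 1)) 0 := by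
    simp [dyckBridgeCount_of_not_even (Nat.not_even_two_mul_add_one _), hasSum_zero]
  simpa using HasSum.even_add_odd (f := fun n ↦ (dyckBridgeCount n : ℝ) * t ^ n) heven hodd
end

section
/- For any finite N-step set S, let p_S = gcd of the set union over s ∈ S of {h - min(s) : h ∈ s}. Then there exist an integer m_S, finite nonnegative integer sets A and C, and a fixed set B of residues modulo p_S such that every N-walk w on S containing at least m_S occurrences of each N-step has reachable-point set described as follows: r is reachable iff r - min(w) ∈ A, or max(w) - r ∈ C, or (r - min(w) ≥ max(A), max(w) - r ≥ max(C), and r - min(w) ≡ max(A) + 1 + b (mod p_S) for some b ∈ B). -/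
/-- The gcd p_S of all step values shifted so that each N-step has minimum 0. -/
noncomputable def stepGcd (S : Finset (Finset ℤ)) : ℤ :=
  (S.biUnion fun s => s.image fun h => h - sInf (s : Set ℤ)).gcd id

open Pointwise

namespace GS



/-! ### Basic facts about sInf/sSup of finsets of integers -/

lemma finset_sInf_mem {s : Finset ℤ} (h : s.Nonempty) : sInf (s : Set ℤ) ∈ s := by
  rw [h.csInf_eq_min']; exact s.min'_mem h

lemma finset_sInf_le {s : Finset ℤ} (h : s.Nonempty) {a : ℤ} (ha : a ∈ s) :
    sInf (s : Set ℤ) ≤ a := by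
  rw [h.csInf_eq_min']; exact s.min'_le a ha

lemma finset_sSup_mem {s : Finset ℤ} (h : s.Nonempty) : sSup (s : Set ℤ) ∈ s := by
  rw [h.csSup_eq_max']; exact s.max'_mem h

lemma finset_le_sSup {s : Finset ℤ} (h : s.Nonempty) {a : ℤ} (ha : a ∈ s) :
    a ≤ sSup (s : Set ℤ) := by
  rw [h.csSup_eq_max']; exact s.le_max' a ha

/-! ### `Clo D` : the additive closure (finite sums) of a finset of integers -/

def Clo (D : Finset ℤ) : Set ℤ := {x | ∃ l : List ℤ, (∀ e ∈ l, e ∈ D) ∧ l.sum = x}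

lemma zero_mem_Clo (D : Finset ℤ) : (0 : ℤ) ∈ Clo D := ⟨[], by simp, rfl⟩

lemma mem_Clo_of_mem {D : Finset ℤ} {d : ℤ} (h : d ∈ D) : d ∈ Clo D :=
  ⟨[d], by simp [h], by simp⟩

lemma add_mem_Clo {D : Finset ℤ} {x y : ℤ} (hx : x ∈ Clo D) (hy : y ∈ Clo D) :
    x + y ∈ Clo D := by
  obtain ⟨lx, hlx, rfl⟩ := hx
  obtain ⟨ly, hly, rfl⟩ := hy
  refine ⟨lx ++ ly, ?_, by simp⟩
  intro e he
  rcases List.mem_append.mp he with h | h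
  exacts [hlx e h, hly e h]

lemma nsmul_mem_Clo {D : Finset ℤ} {x : ℤ} (hx : x ∈ Clo D) (k : ℕ) :
    (k : ℤ) * x ∈ Clo D := by
  induction k with
  | zero => simpa using zero_mem_Clo D
  | succ k ih =>
      have := add_mem_Clo ih hx
      convert this using 1
      push_cast; ring

lemma Clo_nonneg {D : Finset ℤ} (hD : ∀ d ∈ D, 0 ≤ d) {x : ℤ} (hx : x ∈ Clo D) : 0 ≤ x := by
  obtain ⟨l, hl, rfl⟩ := hx
  induction l with
  | nil => simp
  | cons e l ih =>
      have he := hD e (hl e (List.mem_cons_self))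
      have := ih (fun e he' => hl e (List.mem_cons_of_mem _ he'))
      simp only [List.sum_cons]
      linarith

lemma Clo_dvd {D : Finset ℤ} {p : ℤ} (hp : ∀ d ∈ D, p ∣ d) {x : ℤ} (hx : x ∈ Clo D) :
    p ∣ x := by
  obtain ⟨l, hl, rfl⟩ := hx
  induction l with
  | nil => simp
  | cons e l ih =>
      simp only [List.sum_cons]
      exact dvd_add (hp e (hl e (List.mem_cons_self)))
        (ih (fun e he' => hl e (List.mem_cons_of_mem _ he')))

lemma length_le_sum {l : List ℤ} (h : ∀ e ∈ l, 1 ≤ e) : (l.length : ℤ) ≤ l.sum := by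
  induction l with
  | nil => simp
  | cons e l ih =>
      have := ih (fun e he => h e (List.mem_cons_of_mem _ he))
      have he := h e (List.mem_cons_self)
      simp only [List.sum_cons, List.length_cons]
      push_cast
      linarith

lemma sum_filter_ne_zero (l : List ℤ) :
    (l.filter (fun e => e ≠ 0)).sum = l.sum := by
  induction l with
  | nil => simp
  | cons e l ih =>
      by_cases h0 : e = 0
      · subst h0; simpa using ih
      · simp only [List.filter_cons, List.sum_cons, h0]
        simp only [ne_eq, h0, not_false_eq_true, decide_true, if_true, List.sum_cons, ih]

lemma Clo_short {D : Finset ℤ} (hD : ∀ d ∈ D, 0 ≤ d) {x : ℤ} (hx : x ∈ Clo D) :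
    ∃ l : List ℤ, (∀ e ∈ l, e ∈ D) ∧ l.sum = x ∧ (l.length : ℤ) ≤ x := by
  classical
  obtain ⟨l, hl, rfl⟩ := hx
  refine ⟨l.filter (fun e => e ≠ 0), ?_, sum_filter_ne_zero l, ?_⟩
  · intro e he; exact hl e (List.mem_of_mem_filter he)
  · have hpos : ∀ e ∈ l.filter (fun e => e ≠ 0), 1 ≤ e := by
      intro e he
      have h1 := hl e (List.mem_of_mem_filter he)
      have h2 := List.of_mem_filter he
      have h3 := hD e h1
      simp only [ne_eq, decide_not, Bool.not_eq_true', decide_eq_false_iff_not] at h2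
      omega
    calc ((l.filter (fun e => e ≠ 0)).length : ℤ)
        ≤ (l.filter (fun e => e ≠ 0)).sum := length_le_sum hpos
      _ = l.sum := sum_filter_ne_zero l



lemma gcd_nonneg_int (s : Finset ℤ) : 0 ≤ s.gcd id := by
  classical
  induction s using Finset.induction_on with
  | empty => simp [Finset.gcd_empty]
  | insert h ih => rw [Finset.gcd_insert, ← Int.coe_gcd]; positivity

lemma bezout (D : Finset ℤ) : ∃ f : ℤ → ℤ, D.gcd id = ∑ d ∈ D, f d * d := by
  classical
  induction D using Finset.induction_on with
  | empty => exact ⟨fun _ => 0, by simp [Finset.gcd_empty]⟩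
  | @insert a D ha ih =>
      obtain ⟨f, hf⟩ := ih
      refine ⟨fun x => if x = a then Int.gcdA a (D.gcd id)
        else Int.gcdB a (D.gcd id) * f x, ?_⟩
      rw [Finset.gcd_insert, Finset.sum_insert ha]
      simp only [id_eq]
      have h1 : GCDMonoid.gcd a (Finset.gcd D id) =
          a * Int.gcdA a (D.gcd id) + (D.gcd id) * Int.gcdB a (D.gcd id) := by
        rw [← Int.coe_gcd]; exact Int.gcd_eq_gcd_ab a (D.gcd id)
      rw [h1]
      have h2 : ∑ d ∈ D, (if d = a then Int.gcdA a (D.gcd id)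
          else Int.gcdB a (D.gcd id) * f d) * d
          = Int.gcdB a (D.gcd id) * ∑ d ∈ D, f d * d := by
        rw [Finset.mul_sum]
        refine Finset.sum_congr rfl fun d hd => ?_
        have : d ≠ a := fun h => ha (h ▸ hd)
        simp only [this, if_false]; ring
      rw [h2]
      simp only [if_true]
      rw [← hf]
      ring

lemma exists_uv (D : Finset ℤ) (hD : ∀ d ∈ D, 0 ≤ d) :
    ∃ u v : ℤ, u ∈ Clo D ∧ v ∈ Clo D ∧ u - v = D.gcd id := by
  classical
  obtain ⟨f, hf⟩ := bezout D
  refine ⟨∑ d ∈ D, ((f d).toNat : ℤ) * d, ∑ d ∈ D, (((-f d).toNat : ℤ)) * d, ?_, ?_, ?_⟩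
  · exact Finset.sum_induction _ _ (fun _ _ => add_mem_Clo) (zero_mem_Clo D)
      (fun d hd => nsmul_mem_Clo (mem_Clo_of_mem hd) _)
  · exact Finset.sum_induction _ _ (fun _ _ => add_mem_Clo) (zero_mem_Clo D)
      (fun d hd => nsmul_mem_Clo (mem_Clo_of_mem hd) _)
  · rw [← Finset.sum_sub_distrib, hf]
    refine Finset.sum_congr rfl fun d hd => ?_
    have h3 : ((f d).toNat : ℤ) - ((-f d).toNat : ℤ) = f d := by omega
    rw [← sub_mul, h3]

lemma frobenius (D : Finset ℤ) (hD : ∀ d ∈ D, 0 ≤ d) (hp : 0 < D.gcd id) :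
    ∃ F : ℤ, 1 ≤ F ∧ ∀ x : ℤ, D.gcd id ∣ x → F ≤ x → x ∈ Clo D := by
  classical
  obtain ⟨u, v, hu, hv, huv⟩ := exists_uv D hD
  set p := D.gcd id with hpdef
  have hv0 : 0 ≤ v := Clo_nonneg hD hv
  have hup : u = v + p := by omega
  by_cases hveq : v = 0
  · refine ⟨1, le_refl _, fun x hx hx1 => ?_⟩
    obtain ⟨k, rfl⟩ := hx
    have hk0 : 0 ≤ k := by
      by_contra h
      push_neg at h
      have : p * k < 0 := mul_neg_of_pos_of_neg hp h
      omega
    have hueq : u = p := by omega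
    have heq : p * k = ((k.toNat : ℤ)) * u := by rw [hueq, Int.toNat_of_nonneg hk0]; ring
    rw [heq]
    exact nsmul_mem_Clo hu _
  · have hv1 : 1 ≤ v := by omega
    have hFpos : 1 ≤ p * (v + 1) * (v + 1) := by
      have h := mul_pos (mul_pos hp (by linarith : (0:ℤ) < v + 1)) (by linarith : (0:ℤ) < v + 1)
      linarith [Int.add_one_le_iff.mpr h]
    refine ⟨p * (v + 1) * (v + 1), hFpos, fun x hx hxF => ?_⟩
    obtain ⟨k, rfl⟩ := hx
    have hk : (v + 1) * (v + 1) ≤ k := by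
      by_contra h
      push_neg at h
      have : p * k < p * ((v + 1) * (v + 1)) := by
        exact mul_lt_mul_of_pos_left h hp
      nlinarith
    set a := k % v with hadef
    have ha0 : 0 ≤ a := Int.emod_nonneg k (by omega)
    have hav : a < v := Int.emod_lt_of_pos k (by omega)
    set q := k / v with hqdef
    have hkq : k = a + v * q := by
      rw [hadef, hqdef]
      linarith [Int.emod_add_mul_ediv k v]
    have hq : v ≤ q := by
      rw [hqdef, Int.le_ediv_iff_mul_le (by omega : (0:ℤ) < v)]
      nlinarith
    have hq0 : 0 ≤ q := by omega
    have hb0 : 0 ≤ q * p - a := by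
      nlinarith [mul_le_mul_of_nonneg_left (by omega : (1:ℤ) ≤ p) hq0]
    have hkey : p * k = a * u + (q * p - a) * v := by rw [hup, hkq]; ring
    rw [hkey]
    have h1 : a * u = ((a.toNat : ℤ)) * u := by rw [Int.toNat_of_nonneg ha0]
    have h2 : (q * p - a) * v = (((q * p - a).toNat : ℤ)) * v := by
      rw [Int.toNat_of_nonneg hb0]
    rw [h1, h2]
    exact add_mem_Clo (nsmul_mem_Clo hu _) (nsmul_mem_Clo hv _)









noncomputable def lo (w : List (Finset ℤ)) : ℤ := (w.map fun s : Finset ℤ => sInf (s : Set ℤ)).sum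
noncomputable def hi (w : List (Finset ℤ)) : ℤ := (w.map fun s : Finset ℤ => sSup (s : Set ℤ)).sum

lemma lo_cons (s : Finset ℤ) (w : List (Finset ℤ)) : lo (s :: w) = sInf (s : Set ℤ) + lo w := by
  simp [lo]

lemma hi_cons (s : Finset ℤ) (w : List (Finset ℤ)) : hi (s :: w) = sSup (s : Set ℤ) + hi w := by
  simp [hi]

lemma reach_eq_sum (w : List (Finset ℤ)) : reach w = ↑(w.sum) := by
  induction w with
  | nil =>
      ext r
      constructor
      · rintro ⟨v, hc, rfl⟩
        rw [Compatible, List.forall₂_nil_right_iff] at hc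
        subst hc
        simp [Finset.mem_zero]
      · intro hr
        have : r = 0 := by simpa [Finset.mem_zero] using hr
        exact ⟨[], List.Forall₂.nil, this.symm⟩
  | cons s w ih =>
      ext r
      constructor
      · rintro ⟨v, hc, rfl⟩
        obtain ⟨h, t, hh, ht, rfl⟩ := List.forall₂_cons_right_iff.mp hc
        have htr : t.sum ∈ reach w := ⟨t, ht, rfl⟩
        rw [ih] at htr
        rw [List.sum_cons]
        exact_mod_cast Finset.add_mem_add hh htr
      · intro hr
        rw [List.sum_cons] at hr
        obtain ⟨y, hy, z, hz, rfl⟩ := Finset.mem_add.mp hr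
        have hzz : z ∈ reach w := by rw [ih]; exact_mod_cast hz
        obtain ⟨t, ht, rfl⟩ := hzz
        exact ⟨y :: t, List.Forall₂.cons hy ht, by simp⟩

lemma mem_bounds {w : List (Finset ℤ)} (hw : ∀ s ∈ w, s.Nonempty) {x : ℤ}
    (hx : x ∈ w.sum) : lo w ≤ x ∧ x ≤ hi w := by
  induction w generalizing x with
  | nil =>
      rw [List.sum_nil] at hx
      rw [Finset.mem_zero] at hx
      simp [lo, hi, hx]
  | cons s w ih =>
      rw [List.sum_cons] at hx
      obtain ⟨y, hy, z, hz, rfl⟩ := Finset.mem_add.mp hx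
      have hb := ih (fun s hs => hw s (List.mem_cons_of_mem _ hs)) hz
      have hns : s.Nonempty := hw s (List.mem_cons_self)
      have h1 := finset_sInf_le hns hy
      have h2 := finset_le_sSup hns hy
      rw [lo_cons, hi_cons]
      constructor
      · linarith [hb.1]
      · linarith [hb.2]

lemma lo_mem {w : List (Finset ℤ)} (hw : ∀ s ∈ w, s.Nonempty) : lo w ∈ w.sum := by
  induction w with
  | nil => simp [lo, List.sum_nil, Finset.mem_zero]
  | cons s w ih =>
      have h1 := finset_sInf_mem (hw s (List.mem_cons_self))
      have h2 := ih fun s hs => hw s (List.mem_cons_of_mem _ hs)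
      rw [lo_cons, List.sum_cons]
      exact Finset.add_mem_add h1 h2

lemma hi_mem {w : List (Finset ℤ)} (hw : ∀ s ∈ w, s.Nonempty) : hi w ∈ w.sum := by
  induction w with
  | nil => simp [hi, List.sum_nil, Finset.mem_zero]
  | cons s w ih =>
      have h1 := finset_sSup_mem (hw s (List.mem_cons_self))
      have h2 := ih fun s hs => hw s (List.mem_cons_of_mem _ hs)
      rw [hi_cons, List.sum_cons]
      exact Finset.add_mem_add h1 h2

lemma wmin_eq {w : List (Finset ℤ)} (hw : ∀ s ∈ w, s.Nonempty) : wmin w = lo w := by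
  have hre : reach w = ↑(w.sum) := reach_eq_sum w
  have hmem : lo w ∈ reach w := by rw [hre]; exact_mod_cast lo_mem hw
  have hlb : ∀ x ∈ reach w, lo w ≤ x := by
    rw [hre]; intro x hx; exact (mem_bounds hw (by exact_mod_cast hx)).1
  exact le_antisymm (csInf_le ⟨lo w, fun x hx => hlb x hx⟩ hmem) (le_csInf ⟨_, hmem⟩ hlb)

lemma wmax_eq {w : List (Finset ℤ)} (hw : ∀ s ∈ w, s.Nonempty) : wmax w = hi w := by
  have hre : reach w = ↑(w.sum) := reach_eq_sum w
  have hmem : hi w ∈ reach w := by rw [hre]; exact_mod_cast hi_mem hw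
  have hub : ∀ x ∈ reach w, x ≤ hi w := by
    rw [hre]; intro x hx; exact (mem_bounds hw (by exact_mod_cast hx)).2
  exact le_antisymm (csSup_le ⟨_, hmem⟩ hub) (le_csSup ⟨hi w, fun x hx => hub x hx⟩ hmem)



/-- `(k : ℤ) * a ∈ k • s` for `a ∈ s`. -/
lemma nsmul_mem_nsmul {s : Finset ℤ} {a : ℤ} (ha : a ∈ s) (k : ℕ) :
    (k : ℤ) * a ∈ k • s := by
  induction k with
  | zero => simp [Finset.mem_zero]
  | succ k ih =>
      rw [succ_nsmul]
      have : ((k + 1 : ℕ) : ℤ) * a = (k : ℤ) * a + a := by push_cast; ring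
      rw [this]
      exact Finset.add_mem_add ih ha

lemma sum_mem_sum {T : Finset (Finset ℤ)} {f : Finset ℤ → ℤ} {g : Finset ℤ → Finset ℤ}
    (h : ∀ s ∈ T, f s ∈ g s) : ∑ s ∈ T, f s ∈ ∑ s ∈ T, g s := by
  classical
  induction T using Finset.induction_on with
  | empty => simp [Finset.mem_zero]
  | @insert a T ha ih =>
      rw [Finset.sum_insert ha, Finset.sum_insert ha]
      exact Finset.add_mem_add (h a (Finset.mem_insert_self _ _))
        (ih fun s hs => h s (Finset.mem_insert_of_mem hs))

/-- Splitting off one copy of `f s₀` from a sum `∑ n s • f s`. -/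
lemma sum_smul_split {M : Type*} [AddCommMonoid M] {S : Finset (Finset ℤ)}
    (f : Finset ℤ → M) {n : Finset ℤ → ℕ} {s₀ : Finset ℤ} (hs₀ : s₀ ∈ S) (hn : 1 ≤ n s₀) :
    ∑ s ∈ S, n s • f s = f s₀ + ∑ s ∈ S, (Function.update n s₀ (n s₀ - 1)) s • f s := by
  classical
  rw [← Finset.add_sum_erase _ _ hs₀, ← Finset.add_sum_erase _ (fun s => (Function.update n s₀ (n s₀ - 1)) s • f s) hs₀]
  have h1 : ∑ s ∈ S.erase s₀, (Function.update n s₀ (n s₀ - 1)) s • f s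
      = ∑ s ∈ S.erase s₀, n s • f s := by
    refine Finset.sum_congr rfl fun s hs => ?_
    rw [Function.update_of_ne (Finset.ne_of_mem_erase hs)]
  rw [h1, Function.update_self, ← add_assoc]
  congr 1
  obtain ⟨k, hk⟩ : ∃ k, n s₀ = k + 1 := ⟨n s₀ - 1, by omega⟩
  rw [hk]
  simp only [Nat.add_sub_cancel]
  rw [succ_nsmul]
  exact (add_comm _ _)

/-- Lower bound part near the minimum. -/
lemma lower_min (S : Finset (Finset ℤ)) (hS : ∀ s ∈ S, s.Nonempty) :
    ∀ (l : List ℤ) (n : Finset ℤ → ℕ),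
      (∀ e ∈ l, ∃ s ∈ S, ∃ h ∈ s, e = h - sInf (s : Set ℤ)) →
      (∀ s ∈ S, l.length ≤ n s) →
      (∑ s ∈ S, (n s : ℤ) * sInf (s : Set ℤ)) + l.sum ∈ ∑ s ∈ S, n s • s := by
  classical
  intro l
  induction l with
  | nil =>
      intro n _ _
      rw [List.sum_nil, add_zero]
      have : ∑ s ∈ S, (n s : ℤ) * sInf (s : Set ℤ) = ∑ s ∈ S, (n s : ℤ) * sInf (s : Set ℤ) := rfl
      exact sum_mem_sum fun s hs => nsmul_mem_nsmul (finset_sInf_mem (hS s hs)) (n s)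
  | cons e l ih =>
      intro n hl hn
      obtain ⟨s₀, hs₀, h, hh, he⟩ := hl e (List.mem_cons_self)
      have hn₀ : 1 ≤ n s₀ := le_trans (by simp) (hn s₀ hs₀)
      set n' := Function.update n s₀ (n s₀ - 1) with hn'def
      have hsplit1 := sum_smul_split (M := Finset ℤ) (fun s => s) hs₀ hn₀
      have hsplit2 := sum_smul_split (M := ℤ) (fun s => sInf (s : Set ℤ)) hs₀ hn₀
      have hip : ∀ s ∈ S, l.length ≤ n' s := by
        intro s hs
        by_cases hss : s = s₀
        · subst hss; rw [hn'def, Function.update_self]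
          have := hn s hs; simp at this; omega
        · rw [hn'def, Function.update_of_ne hss]
          have := hn s hs; simp at this; omega
      have hil : ∀ e ∈ l, ∃ s ∈ S, ∃ h ∈ s, e = h - sInf (s : Set ℤ) :=
        fun e he => hl e (List.mem_cons_of_mem _ he)
      have key := ih n' hil hip
      have hcast : ∀ s, (n s : ℤ) • sInf (s : Set ℤ) = (n s : ℤ) * sInf (s : Set ℤ) := fun s => rfl
      -- rewrite sums
      have hsum2 : ∑ s ∈ S, (n s : ℤ) * sInf (s : Set ℤ)
          = sInf (s₀ : Set ℤ) + ∑ s ∈ S, (n' s : ℤ) * sInf (s : Set ℤ) := by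
        have := hsplit2
        simpa [nsmul_eq_mul] using this
      rw [List.sum_cons, hsum2, hsplit1]
      have harr : sInf (s₀ : Set ℤ) + ((∑ s ∈ S, (n' s : ℤ) * sInf (s : Set ℤ)) + (e + l.sum))
          = h + ((∑ s ∈ S, (n' s : ℤ) * sInf (s : Set ℤ)) + l.sum) := by
        rw [he]; ring
      rw [add_assoc, harr]
      exact Finset.add_mem_add hh key

/-- Lower bound part near the maximum. -/
lemma lower_max (S : Finset (Finset ℤ)) (hS : ∀ s ∈ S, s.Nonempty) :
    ∀ (l : List ℤ) (n : Finset ℤ → ℕ),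
      (∀ e ∈ l, ∃ s ∈ S, ∃ h ∈ s, e = sSup (s : Set ℤ) - h) →
      (∀ s ∈ S, l.length ≤ n s) →
      (∑ s ∈ S, (n s : ℤ) * sSup (s : Set ℤ)) - l.sum ∈ ∑ s ∈ S, n s • s := by
  classical
  intro l
  induction l with
  | nil =>
      intro n _ _
      rw [List.sum_nil, sub_zero]
      exact sum_mem_sum fun s hs => nsmul_mem_nsmul (finset_sSup_mem (hS s hs)) (n s)
  | cons e l ih =>
      intro n hl hn
      obtain ⟨s₀, hs₀, h, hh, he⟩ := hl e (List.mem_cons_self)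
      have hn₀ : 1 ≤ n s₀ := le_trans (by simp) (hn s₀ hs₀)
      set n' := Function.update n s₀ (n s₀ - 1) with hn'def
      have hsplit1 := sum_smul_split (M := Finset ℤ) (fun s => s) hs₀ hn₀
      have hsplit2 := sum_smul_split (M := ℤ) (fun s => sSup (s : Set ℤ)) hs₀ hn₀
      have hip : ∀ s ∈ S, l.length ≤ n' s := by
        intro s hs
        by_cases hss : s = s₀
        · subst hss; rw [hn'def, Function.update_self]
          have := hn s hs; simp at this; omega
        · rw [hn'def, Function.update_of_ne hss]
          have := hn s hs; simp at this; omega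
      have hil : ∀ e ∈ l, ∃ s ∈ S, ∃ h ∈ s, e = sSup (s : Set ℤ) - h :=
        fun e he => hl e (List.mem_cons_of_mem _ he)
      have key := ih n' hil hip
      have hsum2 : ∑ s ∈ S, (n s : ℤ) * sSup (s : Set ℤ)
          = sSup (s₀ : Set ℤ) + ∑ s ∈ S, (n' s : ℤ) * sSup (s : Set ℤ) := by
        have := hsplit2
        simpa [nsmul_eq_mul] using this
      rw [List.sum_cons, hsum2, hsplit1]
      have harr : sSup (s₀ : Set ℤ) + (∑ s ∈ S, (n' s : ℤ) * sSup (s : Set ℤ)) - (e + l.sum)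
          = h + ((∑ s ∈ S, (n' s : ℤ) * sSup (s : Set ℤ)) - l.sum) := by
        rw [he]; ring
      rw [harr]
      exact Finset.add_mem_add hh key

/-- Decomposition of a member of `k • s`. -/
lemma mem_nsmul_upper {S : Finset (Finset ℤ)} {s : Finset ℤ} (hsS : s ∈ S) (k : ℕ) {a : ℤ}
    (ha : a ∈ k • s) :
    a - (k : ℤ) * sInf (s : Set ℤ) ∈ Clo (S.biUnion fun s => s.image fun h => h - sInf (s : Set ℤ)) ∧
    (k : ℤ) * sSup (s : Set ℤ) - a ∈ Clo (S.biUnion fun s => s.image fun h => sSup (s : Set ℤ) - h) := by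
  classical
  induction k generalizing a with
  | zero =>
      rw [zero_nsmul, Finset.mem_zero] at ha
      subst ha
      constructor <;> simpa using zero_mem_Clo _
  | succ k ih =>
      rw [succ_nsmul] at ha
      obtain ⟨y, hy, z, hz, rfl⟩ := Finset.mem_add.mp ha
      obtain ⟨ih1, ih2⟩ := ih hy
      constructor
      · have hD : z - sInf (s : Set ℤ) ∈ (S.biUnion fun s => s.image fun h => h - sInf (s : Set ℤ)) := by
          rw [Finset.mem_biUnion]
          exact ⟨s, hsS, Finset.mem_image.mpr ⟨z, hz, rfl⟩⟩
        have : y + z - ((k + 1 : ℕ) : ℤ) * sInf (s : Set ℤ)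
            = (y - (k : ℤ) * sInf (s : Set ℤ)) + (z - sInf (s : Set ℤ)) := by push_cast; ring
        rw [this]
        exact add_mem_Clo ih1 (mem_Clo_of_mem hD)
      · have hD : sSup (s : Set ℤ) - z ∈ (S.biUnion fun s => s.image fun h => sSup (s : Set ℤ) - h) := by
          rw [Finset.mem_biUnion]
          exact ⟨s, hsS, Finset.mem_image.mpr ⟨z, hz, rfl⟩⟩
        have : ((k + 1 : ℕ) : ℤ) * sSup (s : Set ℤ) - (y + z)
            = ((k : ℤ) * sSup (s : Set ℤ) - y) + (sSup (s : Set ℤ) - z) := by push_cast; ring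
        rw [this]
        exact add_mem_Clo ih2 (mem_Clo_of_mem hD)

lemma mem_sum_upper {S : Finset (Finset ℤ)} {T : Finset (Finset ℤ)} (hT : ∀ s ∈ T, s ∈ S)
    (n : Finset ℤ → ℕ) {x : ℤ} (hx : x ∈ ∑ s ∈ T, n s • s) :
    (x - ∑ s ∈ T, (n s : ℤ) * sInf (s : Set ℤ)) ∈ Clo (S.biUnion fun s => s.image fun h => h - sInf (s : Set ℤ)) ∧
    ((∑ s ∈ T, (n s : ℤ) * sSup (s : Set ℤ)) - x) ∈ Clo (S.biUnion fun s => s.image fun h => sSup (s : Set ℤ) - h) := by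
  classical
  induction T using Finset.induction_on generalizing x with
  | empty =>
      rw [Finset.sum_empty, Finset.mem_zero] at hx
      subst hx
      constructor <;> simpa using zero_mem_Clo _
  | @insert a T ha ih =>
      rw [Finset.sum_insert ha] at hx
      obtain ⟨y, hy, z, hz, rfl⟩ := Finset.mem_add.mp hx
      obtain ⟨h1, h2⟩ := mem_nsmul_upper (hT a (Finset.mem_insert_self _ _)) (n a) hy
      obtain ⟨h3, h4⟩ := ih (fun s hs => hT s (Finset.mem_insert_of_mem hs)) hz
      rw [Finset.sum_insert ha, Finset.sum_insert ha]
      constructor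
      · have : y + z - ((n a : ℤ) * sInf (a : Set ℤ) + ∑ s ∈ T, (n s : ℤ) * sInf (s : Set ℤ))
            = (y - (n a : ℤ) * sInf (a : Set ℤ)) + (z - ∑ s ∈ T, (n s : ℤ) * sInf (s : Set ℤ)) := by ring
        rw [this]
        exact add_mem_Clo h1 h3
      · have : ((n a : ℤ) * sSup (a : Set ℤ) + ∑ s ∈ T, (n s : ℤ) * sSup (s : Set ℤ)) - (y + z)
            = ((n a : ℤ) * sSup (a : Set ℤ) - y) + ((∑ s ∈ T, (n s : ℤ) * sSup (s : Set ℤ)) - z) := by ring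
        rw [this]
        exact add_mem_Clo h2 h4

/-- The greedy lemma. -/
lemma greedy (Mx : ℤ) (hMx : 1 ≤ Mx) (T : Finset (Finset ℤ)) :
    ∀ (M : Finset ℤ → ℤ), (∀ s ∈ T, 0 ≤ M s) → (∀ s ∈ T, M s ≤ Mx) →
    ∀ (c : Finset ℤ → ℕ) (t : ℤ), 0 ≤ t → t ≤ ∑ s ∈ T, (c s : ℤ) * M s →
    ∃ u : Finset ℤ → ℕ, (∀ s, u s ≤ c s) ∧
      t - Mx < ∑ s ∈ T, (u s : ℤ) * M s ∧ ∑ s ∈ T, (u s : ℤ) * M s ≤ t := by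
  classical
  induction T using Finset.induction_on with
  | empty =>
      intro M _ _ c t ht0 ht
      rw [Finset.sum_empty] at ht
      refine ⟨fun _ => 0, fun s => Nat.zero_le _, ?_, ?_⟩
      · rw [Finset.sum_empty]; linarith
      · rw [Finset.sum_empty]; linarith
  | @insert a T ha ih =>
      intro M hM0 hMxs c t ht0 ht
      rw [Finset.sum_insert ha] at ht
      by_cases hc : (c a : ℤ) * M a ≤ t
      · obtain ⟨u, hu, h1, h2⟩ := ih M (fun s hs => hM0 s (Finset.mem_insert_of_mem hs))
          (fun s hs => hMxs s (Finset.mem_insert_of_mem hs)) c (t - (c a : ℤ) * M a)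
          (by linarith) (by linarith)
        refine ⟨Function.update u a (c a), ?_, ?_, ?_⟩
        · intro s
          by_cases hs : s = a
          · subst hs; rw [Function.update_self]
          · rw [Function.update_of_ne hs]; exact hu s
        all_goals {
          rw [Finset.sum_insert ha, Function.update_self]
          have hTs : ∑ s ∈ T, ((Function.update u a (c a)) s : ℤ) * M s
              = ∑ s ∈ T, (u s : ℤ) * M s := by
            refine Finset.sum_congr rfl fun s hs => ?_
            rw [Function.update_of_ne (by rintro rfl; exact ha hs)]
          rw [hTs]
          linarith
        }
      · push_neg at hc
        have hMa0 : 0 < M a := by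
          rcases lt_or_eq_of_le (hM0 a (Finset.mem_insert_self _ _)) with h | h
          · exact h
          · exfalso; rw [← h] at hc; simp at hc; linarith
        set q := t / M a with hqdef
        have hq0 : 0 ≤ q := Int.ediv_nonneg ht0 hMa0.le
        have hqM : q * M a ≤ t := by
          rw [hqdef]
          have := Int.emod_add_mul_ediv t (M a)
          have hm := Int.emod_nonneg t (ne_of_gt hMa0)
          linarith [Int.emod_add_mul_ediv t (M a)]
        have hrem : t - q * M a < M a := by
          rw [hqdef]
          have := Int.emod_add_mul_ediv t (M a)
          have hm := Int.emod_lt_of_pos t hMa0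
          linarith
        have hqc : q < (c a : ℤ) := by
          by_contra hle
          push_neg at hle
          have : (c a : ℤ) * M a ≤ q * M a := mul_le_mul_of_nonneg_right hle hMa0.le
          linarith
        refine ⟨Function.update (fun _ => 0) a q.toNat, ?_, ?_, ?_⟩
        · intro s
          by_cases hs : s = a
          · subst hs; rw [Function.update_self]; omega
          · rw [Function.update_of_ne hs]; exact Nat.zero_le _
        all_goals {
          rw [Finset.sum_insert ha, Function.update_self]
          have hTs : ∑ s ∈ T, ((Function.update (fun _ => 0) a q.toNat) s : ℤ) * M s = 0 := by
            refine Finset.sum_eq_zero fun s hs => ?_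
            rw [Function.update_of_ne (by rintro rfl; exact ha hs)]
            simp
          rw [hTs, Int.toNat_of_nonneg hq0]
          have hMam : M a ≤ Mx := hMxs a (Finset.mem_insert_self _ _)
          linarith
        }


lemma lo_def (w : List (Finset ℤ)) : lo w = (w.map fun s : Finset ℤ => sInf (s : Set ℤ)).sum := rfl

lemma hi_def (w : List (Finset ℤ)) : hi w = (w.map fun s : Finset ℤ => sSup (s : Set ℤ)).sum := rfl

/-- Expressing a list sum via counts over its `toFinset`. -/
lemma list_sum_eq_sum_count {M : Type*} [AddCommMonoid M] (w : List (Finset ℤ)) (f : Finset ℤ → M) :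
    (w.map f).sum = ∑ s ∈ w.toFinset, w.count s • f s := by
  have h := Finset.sum_multiset_map_count (w : Multiset (Finset ℤ)) f
  simpa using h

end GS

/-- structure theorem for reachable points of N-walks with many
occurrences of every N-step: there are an integer m_S and fixed finite sets
A, C (patterns near the minimum and the maximum) and B (residues) such that for every
N-walk w on S containing at least m_S occurrences of each N-step of S, a point r is
reachable iff r - min(w) ∈ A, or max(w) - r ∈ C, or r - min(w) ≥ max A,
max(w) - r ≥ max C and r - min(w) ≡ max A + 1 + b (mod p_S) for some b ∈ B. -/

theorem general_structure (S : Finset (Finset ℤ)) (hS : ∀ s ∈ S, s.Nonempty) :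
    ∃ (mS : ℕ) (A B C : Finset ℕ),
      ∀ w : List (Finset ℤ), (∀ s ∈ w, s ∈ S) → (∀ s ∈ S, mS ≤ w.count s) →
        ∀ r : ℤ,
          (r ∈ reach w ↔
            (∃ a ∈ A, r - wmin w = (a : ℤ)) ∨
            (∃ c ∈ C, wmax w - r = (c : ℤ)) ∨
            (((A.sup id : ℕ) : ℤ) ≤ r - wmin w ∧ ((C.sup id : ℕ) : ℤ) ≤ wmax w - r ∧
              ∃ b ∈ B, stepGcd S ∣ (r - wmin w - ((A.sup id : ℕ) : ℤ) - 1 - (b : ℤ)))) := by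

  classical
  set D : Finset ℤ := S.biUnion fun s => s.image fun h => h - sInf (s : Set ℤ) with hDdef
  set D' : Finset ℤ := S.biUnion fun s => s.image fun h => sSup (s : Set ℤ) - h with hD'def
  have hmemD : ∀ e : ℤ, e ∈ D ↔ ∃ s ∈ S, ∃ h ∈ s, e = h - sInf (s : Set ℤ) := by
    intro e
    rw [hDdef, Finset.mem_biUnion]
    constructor
    · rintro ⟨s, hs, he⟩
      obtain ⟨h, hh, rfl⟩ := Finset.mem_image.mp he
      exact ⟨s, hs, h, hh, rfl⟩
    · rintro ⟨s, hs, h, hh, rfl⟩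
      exact ⟨s, hs, Finset.mem_image.mpr ⟨h, hh, rfl⟩⟩
  have hmemD' : ∀ e : ℤ, e ∈ D' ↔ ∃ s ∈ S, ∃ h ∈ s, e = sSup (s : Set ℤ) - h := by
    intro e
    rw [hD'def, Finset.mem_biUnion]
    constructor
    · rintro ⟨s, hs, he⟩
      obtain ⟨h, hh, rfl⟩ := Finset.mem_image.mp he
      exact ⟨s, hs, h, hh, rfl⟩
    · rintro ⟨s, hs, h, hh, rfl⟩
      exact ⟨s, hs, Finset.mem_image.mpr ⟨h, hh, rfl⟩⟩
  have hD0 : ∀ d ∈ D, 0 ≤ d := by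
    intro d hd
    obtain ⟨s, hs, h, hh, rfl⟩ := (hmemD d).mp hd
    have := GS.finset_sInf_le (hS s hs) hh
    linarith
  have hD'0 : ∀ d ∈ D', 0 ≤ d := by
    intro d hd
    obtain ⟨s, hs, h, hh, rfl⟩ := (hmemD' d).mp hd
    have := GS.finset_le_sSup (hS s hs) hh
    linarith
  set p := D.gcd id with hpdef
  have hstep : stepGcd S = p := rfl
  have hpdvd : ∀ d ∈ D, p ∣ d := fun d hd => Finset.gcd_dvd hd
  have hMD : ∀ s ∈ S, sSup (s : Set ℤ) - sInf (s : Set ℤ) ∈ D := by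
    intro s hs
    exact (hmemD _).mpr ⟨s, hs, sSup (s : Set ℤ), GS.finset_sSup_mem (hS s hs), rfl⟩
  have hMD' : ∀ s ∈ S, sSup (s : Set ℤ) - sInf (s : Set ℤ) ∈ D' := by
    intro s hs
    exact (hmemD' _).mpr ⟨s, hs, sInf (s : Set ℤ), GS.finset_sInf_mem (hS s hs), rfl⟩
  have hpdvd' : ∀ d ∈ D', p ∣ d := by
    intro d hd
    obtain ⟨s, hs, h, hh, rfl⟩ := (hmemD' d).mp hd
    have h1 : p ∣ sSup (s : Set ℤ) - sInf (s : Set ℤ) := hpdvd _ (hMD s hs)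
    have h2 : p ∣ h - sInf (s : Set ℤ) := hpdvd _ ((hmemD _).mpr ⟨s, hs, h, hh, rfl⟩)
    have : sSup (s : Set ℤ) - h
        = (sSup (s : Set ℤ) - sInf (s : Set ℤ)) - (h - sInf (s : Set ℤ)) := by ring
    rw [this]
    exact dvd_sub h1 h2
  have hgcd'dvd : ∀ d ∈ D, D'.gcd id ∣ d := by
    intro d hd
    obtain ⟨s, hs, h, hh, rfl⟩ := (hmemD d).mp hd
    have h1 : D'.gcd id ∣ sSup (s : Set ℤ) - sInf (s : Set ℤ) := Finset.gcd_dvd (hMD' s hs)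
    have h2 : D'.gcd id ∣ sSup (s : Set ℤ) - h :=
      Finset.gcd_dvd ((hmemD' _).mpr ⟨s, hs, h, hh, rfl⟩)
    have heq : h - sInf (s : Set ℤ)
        = (sSup (s : Set ℤ) - sInf (s : Set ℤ)) - (sSup (s : Set ℤ) - h) := by ring
    rw [heq]
    exact dvd_sub h1 h2
  have hgcdeq : D'.gcd id = p := by
    refine Int.dvd_antisymm (GS.gcd_nonneg_int _) (GS.gcd_nonneg_int _) ?_ ?_
    · exact Finset.dvd_gcd fun d hd => hgcd'dvd d hd
    · exact Finset.dvd_gcd fun d hd => hpdvd' d hd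
  have hp0 : 0 ≤ p := GS.gcd_nonneg_int D
  by_cases hpz : p = 0
  -- ===== Degenerate case: all steps are singletons =====
  · refine ⟨1, {0}, ∅, {0}, ?_⟩
    intro w hw hcnt r
    have hwne : ∀ s ∈ w, s.Nonempty := fun s hs => hS s (hw s hs)
    have hwS : w.toFinset = S := by
      ext s
      rw [List.mem_toFinset]
      constructor
      · exact hw s
      · intro hs
        have := hcnt s hs
        exact List.count_pos_iff.mp (by omega)
    set n : Finset ℤ → ℕ := fun s => w.count s with hndef
    have hG : (w.sum : Finset ℤ) = ∑ s ∈ S, n s • s := by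
      have h := GS.list_sum_eq_sum_count w (fun s => s)
      rw [List.map_id', hwS] at h
      exact h
    have hL : GS.lo w = ∑ s ∈ S, (n s : ℤ) * sInf (s : Set ℤ) := by
      rw [GS.lo_def, GS.list_sum_eq_sum_count, hwS]
      simp only [nsmul_eq_mul]
      rfl
    have hH : GS.hi w = ∑ s ∈ S, (n s : ℤ) * sSup (s : Set ℤ) := by
      rw [GS.hi_def, GS.list_sum_eq_sum_count, hwS]
      simp only [nsmul_eq_mul]
      rfl
    have hsing : ∀ s ∈ S, sSup (s : Set ℤ) = sInf (s : Set ℤ) := by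
      intro s hs
      have hd := hMD s hs
      have := Finset.gcd_eq_zero_iff.mp (hpdef ▸ hpz) _ hd
      simp only [id_eq] at this
      linarith
    have hHL : GS.hi w = GS.lo w := by
      rw [hL, hH]
      exact Finset.sum_congr rfl fun s hs => by rw [hsing s hs]
    rw [GS.reach_eq_sum, GS.wmin_eq hwne, GS.wmax_eq hwne, hG]
    constructor
    · intro hr
      have hr' : r ∈ ∑ s ∈ S, n s • s := hr
      obtain ⟨h1, h2⟩ := GS.mem_sum_upper (S := S) (fun s hs => hs) n hr'
      have hge : 0 ≤ r - ∑ s ∈ S, (n s : ℤ) * sInf (s : Set ℤ) := GS.Clo_nonneg hD0 h1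
      have hle : 0 ≤ (∑ s ∈ S, (n s : ℤ) * sSup (s : Set ℤ)) - r := GS.Clo_nonneg hD'0 h2
      rw [← hL] at hge
      rw [← hH] at hle
      left
      refine ⟨0, Finset.mem_singleton_self 0, ?_⟩
      push_cast
      rw [hHL] at hle
      linarith
    · intro hr
      have hreq : r = GS.lo w := by
        rcases hr with ⟨a, ha, hxa⟩ | ⟨c, hc, hxc⟩ | ⟨_, _, b, hb, _⟩
        · rw [Finset.mem_singleton] at ha
          subst ha
          push_cast at hxa
          linarith
        · rw [Finset.mem_singleton] at hc
          subst hc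
          push_cast at hxc
          rw [hHL] at hxc
          linarith
        · exact absurd hb (Finset.notMem_empty b)
      have key := GS.lower_min S hS [] n (by simp) (fun s _ => by simp)
      simp only [List.sum_nil, add_zero] at key
      show r ∈ ∑ s ∈ S, n s • s
      rw [hreq, hL]
      exact key
  -- ===== Main case: p ≥ 1 =====
  · have hppos : 0 < p := lt_of_le_of_ne hp0 (Ne.symm hpz)
    have hp1 : 1 ≤ p := hppos
    obtain ⟨F, hF1, hF⟩ := GS.frobenius D hD0 (hpdef ▸ hppos)
    obtain ⟨F', hF'1, hF'⟩ := GS.frobenius D' hD'0 (by rw [hgcdeq]; exact hppos)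
    rw [← hpdef] at hF
    rw [hgcdeq] at hF'
    set P : ℤ := ∑ s ∈ S, (sSup (s : Set ℤ) - sInf (s : Set ℤ)) with hPdef
    have hP0 : 0 ≤ P := Finset.sum_nonneg fun s hs => hD0 _ (hMD s hs)
    set Mx : ℤ := P + 1 with hMxdef
    have hMx1 : 1 ≤ Mx := by omega
    have hMs : ∀ s ∈ S, sSup (s : Set ℤ) - sInf (s : Set ℤ) ≤ Mx := by
      intro s hs
      have h2 := Finset.single_le_sum (f := fun s : Finset ℤ => sSup (s : Set ℤ) - sInf (s : Set ℤ))
        (fun s hs => hD0 _ (hMD s hs)) hs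
      rw [← hPdef] at h2
      omega
    set Bc : ℤ := F + Mx with hBcdef
    have hBc1 : 1 ≤ Bc := by omega
    set K : ℤ := p * F with hKdef
    have hKF : F ≤ K := by nlinarith [mul_le_mul_of_nonneg_right hp1 (le_trans zero_le_one hF1)]
    have hK1 : 1 ≤ K := by nlinarith [mul_le_mul_of_nonneg_right hp1 (le_trans zero_le_one hF1)]
    have hKp : p ∣ K := Dvd.intro F rfl
    set K' : ℤ := p * F' + p * (Bc * P) + p * F with hK'def
    have hBcP0 : 0 ≤ Bc * P := mul_nonneg (by omega) hP0
    have hKF'aux : F' ≤ p * F' := by nlinarith [mul_le_mul_of_nonneg_right hp1 (le_trans zero_le_one hF'1)]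
    have hKBaux : Bc * P ≤ p * (Bc * P) := by nlinarith [mul_le_mul_of_nonneg_right hp1 hBcP0]
    have hK'F' : F' ≤ K' := by nlinarith
    have hK'1 : 1 ≤ K' := by nlinarith
    have hK'p : p ∣ K' := by
      apply dvd_add
      apply dvd_add
      · exact Dvd.intro F' rfl
      · exact Dvd.intro _ rfl
      · exact Dvd.intro F rfl
    have hBcPK' : Bc * P ≤ K' := by nlinarith
    have hKClo : K ∈ GS.Clo D := hF K hKp hKF
    have hK'Clo : K' ∈ GS.Clo D' := hF' K' hK'p hK'F'
    set mS : ℕ := K.toNat + K'.toNat + Bc.toNat + 1 with hmSdef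
    have hmSK : K ≤ (mS : ℤ) := by omega
    have hmSK' : K' ≤ (mS : ℤ) := by omega
    have hmSBc : Bc ≤ (mS : ℤ) := by omega
    set A : Finset ℕ := (Finset.range (K.toNat + 1)).filter (fun a => ((a : ℤ) ∈ GS.Clo D)) with hAdef
    set C : Finset ℕ := (Finset.range (K'.toNat + 1)).filter (fun c => ((c : ℤ) ∈ GS.Clo D')) with hCdef
    refine ⟨mS, A, {(p - 1).toNat}, C, ?_⟩
    have hKA : K.toNat ∈ A := by
      rw [hAdef, Finset.mem_filter, Finset.mem_range]
      refine ⟨by omega, ?_⟩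
      rw [Int.toNat_of_nonneg (by omega)]
      exact hKClo
    have hsupA : ((A.sup id : ℕ) : ℤ) = K := by
      have h1 : A.sup id ≤ K.toNat := by
        apply Finset.sup_le
        intro a ha
        rw [hAdef, Finset.mem_filter, Finset.mem_range] at ha
        simp only [id_eq]
        omega
      have h2 : K.toNat ≤ A.sup id := Finset.le_sup (f := id) hKA
      have : A.sup id = K.toNat := le_antisymm h1 h2
      rw [this]
      omega
    have hK'C : K'.toNat ∈ C := by
      rw [hCdef, Finset.mem_filter, Finset.mem_range]
      refine ⟨by omega, ?_⟩
      rw [Int.toNat_of_nonneg (by omega)]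
      exact hK'Clo
    have hsupC : ((C.sup id : ℕ) : ℤ) = K' := by
      have h1 : C.sup id ≤ K'.toNat := by
        apply Finset.sup_le
        intro a ha
        rw [hCdef, Finset.mem_filter, Finset.mem_range] at ha
        simp only [id_eq]
        omega
      have h2 : K'.toNat ≤ C.sup id := Finset.le_sup (f := id) hK'C
      have : C.sup id = K'.toNat := le_antisymm h1 h2
      rw [this]
      omega
    intro w hw hcnt r
    have hwne : ∀ s ∈ w, s.Nonempty := fun s hs => hS s (hw s hs)
    have hwS : w.toFinset = S := by
      ext s
      rw [List.mem_toFinset]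
      constructor
      · exact hw s
      · intro hs
        have := hcnt s hs
        exact List.count_pos_iff.mp (by omega)
    set n : Finset ℤ → ℕ := fun s => w.count s with hndef
    have hncnt : ∀ s ∈ S, mS ≤ n s := fun s hs => hcnt s hs
    have hG : (w.sum : Finset ℤ) = ∑ s ∈ S, n s • s := by
      have h := GS.list_sum_eq_sum_count w (fun s => s)
      rw [List.map_id', hwS] at h
      exact h
    have hL : GS.lo w = ∑ s ∈ S, (n s : ℤ) * sInf (s : Set ℤ) := by
      rw [GS.lo_def, GS.list_sum_eq_sum_count, hwS]
      simp only [nsmul_eq_mul]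
      rfl
    have hH : GS.hi w = ∑ s ∈ S, (n s : ℤ) * sSup (s : Set ℤ) := by
      rw [GS.hi_def, GS.list_sum_eq_sum_count, hwS]
      simp only [nsmul_eq_mul]
      rfl
    rw [hstep, GS.reach_eq_sum, GS.wmin_eq hwne, GS.wmax_eq hwne, hG, hsupA, hsupC]
    have hptn : ((p - 1).toNat : ℤ) = p - 1 := by omega
    constructor
    -- ===== Forward direction =====
    · intro hr
      have hr' : r ∈ ∑ s ∈ S, n s • s := hr
      obtain ⟨h1, h2⟩ := GS.mem_sum_upper (S := S) (fun s hs => hs) n hr'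
      rw [← hL] at h1
      rw [← hH] at h2
      have hx0 : 0 ≤ r - GS.lo w := GS.Clo_nonneg hD0 h1
      have hx0' : 0 ≤ GS.hi w - r := GS.Clo_nonneg hD'0 h2
      have hpx : p ∣ r - GS.lo w := GS.Clo_dvd hpdvd h1
      by_cases hxK : r - GS.lo w ≤ K
      · left
        refine ⟨(r - GS.lo w).toNat, ?_, by omega⟩
        rw [hAdef, Finset.mem_filter, Finset.mem_range]
        refine ⟨by omega, ?_⟩
        rw [Int.toNat_of_nonneg hx0]
        exact h1
      · by_cases hxK' : GS.hi w - r ≤ K'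
        · right; left
          refine ⟨(GS.hi w - r).toNat, ?_, by omega⟩
          rw [hCdef, Finset.mem_filter, Finset.mem_range]
          refine ⟨by omega, ?_⟩
          rw [Int.toNat_of_nonneg hx0']
          exact h2
        · right; right
          refine ⟨by omega, by omega, (p - 1).toNat, Finset.mem_singleton_self _, ?_⟩
          have heq : r - GS.lo w - K - 1 - ((p - 1).toNat : ℤ) = (r - GS.lo w) - K - p := by
            rw [hptn]; ring
          rw [heq]
          exact dvd_sub (dvd_sub hpx hKp) dvd_rfl
    -- ===== Backward direction =====
    · rintro (⟨a, ha, hxa⟩ | ⟨c, hc, hxc⟩ | ⟨hxA, hxC, b, hb, hdvd⟩)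
      · rw [hAdef, Finset.mem_filter, Finset.mem_range] at ha
        obtain ⟨haK, haClo⟩ := ha
        obtain ⟨l, hlD, hlsum, hllen⟩ := GS.Clo_short hD0 haClo
        have hlen : ∀ s ∈ S, l.length ≤ n s := by
          intro s hs
          have := hncnt s hs
          omega
        have key := GS.lower_min S hS l n
          (fun e he => (hmemD e).mp (hlD e he)) hlen
        rw [hlsum, ← hL] at key
        show r ∈ ∑ s ∈ S, n s • s
        have : r = GS.lo w + (a : ℤ) := by omega
        rw [this]
        exact key
      · rw [hCdef, Finset.mem_filter, Finset.mem_range] at hc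
        obtain ⟨hcK, hcClo⟩ := hc
        obtain ⟨l, hlD, hlsum, hllen⟩ := GS.Clo_short hD'0 hcClo
        have hlen : ∀ s ∈ S, l.length ≤ n s := by
          intro s hs
          have := hncnt s hs
          omega
        have key := GS.lower_max S hS l n
          (fun e he => (hmemD' e).mp (hlD e he)) hlen
        rw [hlsum, ← hH] at key
        show r ∈ ∑ s ∈ S, n s • s
        have : r = GS.hi w - (c : ℤ) := by omega
        rw [this]
        exact key
      · -- middle case
        rw [Finset.mem_singleton] at hb
        subst hb
        have hpx : p ∣ r - GS.lo w := by
          have heq : r - GS.lo w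
              = (r - GS.lo w - K - 1 - ((p - 1).toNat : ℤ)) + K + p := by
            rw [hptn]; ring
          rw [heq]
          exact dvd_add (dvd_add hdvd hKp) dvd_rfl
        set x : ℤ := r - GS.lo w with hxdef
        set c : Finset ℤ → ℕ := fun s => n s - Bc.toNat with hcdef
        have hccast : ∀ s ∈ S, ((c s : ℕ) : ℤ) = (n s : ℤ) - Bc := by
          intro s hs
          have := hncnt s hs
          rw [hcdef]
          simp only
          omega
        have hsumc : ∑ s ∈ S, ((c s : ℕ) : ℤ) * (sSup (s : Set ℤ) - sInf (s : Set ℤ))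
            = (GS.hi w - GS.lo w) - Bc * P := by
          have h1 : ∑ s ∈ S, ((c s : ℕ) : ℤ) * (sSup (s : Set ℤ) - sInf (s : Set ℤ))
              = ∑ s ∈ S, (((n s : ℤ) * sSup (s : Set ℤ) - (n s : ℤ) * sInf (s : Set ℤ))
                - Bc * (sSup (s : Set ℤ) - sInf (s : Set ℤ))) := by
            refine Finset.sum_congr rfl fun s hs => ?_
            rw [hccast s hs]; ring
          rw [h1, Finset.sum_sub_distrib, Finset.sum_sub_distrib, ← Finset.mul_sum, ← hPdef,
            hL, hH]
        have hxup : x ≤ (GS.hi w - GS.lo w) - K' := by omega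
        have ht0 : 0 ≤ x - F := by omega
        have htSig : x - F ≤ ∑ s ∈ S, ((c s : ℕ) : ℤ) * (sSup (s : Set ℤ) - sInf (s : Set ℤ)) := by
          rw [hsumc]
          omega
        obtain ⟨u, hu, hVlow, hVhigh⟩ := GS.greedy Mx hMx1 S
          (fun s => sSup (s : Set ℤ) - sInf (s : Set ℤ))
          (fun s hs => hD0 _ (hMD s hs)) hMs c (x - F) ht0 htSig
        set V : ℤ := ∑ s ∈ S, (u s : ℤ) * (sSup (s : Set ℤ) - sInf (s : Set ℤ)) with hVdef
        have hpV : p ∣ V := by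
          apply Finset.dvd_sum
          intro s hs
          exact Dvd.dvd.mul_left (hpdvd _ (hMD s hs)) _
        set z : ℤ := x - V with hzdef
        have hz1 : F ≤ z := by omega
        have hz2 : z < Bc := by omega
        have hpz : p ∣ z := by
          rw [hzdef, hxdef]
          exact dvd_sub hpx hpV
        have hzClo : z ∈ GS.Clo D := hF z hpz hz1
        obtain ⟨l, hlD, hlsum, hllen⟩ := GS.Clo_short hD0 hzClo
        set n' : Finset ℤ → ℕ := fun s => n s - u s with hn'def
        have hsplit : ∑ s ∈ S, n s • s = (∑ s ∈ S, u s • s) + ∑ s ∈ S, n' s • s := by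
          rw [← Finset.sum_add_distrib]
          refine Finset.sum_congr rfl fun s hs => ?_
          rw [← add_nsmul]
          congr 1
          have h1 := hu s
          have h2 := hncnt s hs
          rw [hn'def]
          simp only
          rw [hcdef] at h1
          simp only at h1
          omega
        have hn'cast : ∀ s ∈ S, ((n' s : ℕ) : ℤ) = (n s : ℤ) - (u s : ℤ) := by
          intro s hs
          have h1 := hu s
          have h2 := hncnt s hs
          rw [hn'def]
          simp only
          rw [hcdef] at h1
          simp only at h1
          omega
        have hlen : ∀ s ∈ S, l.length ≤ n' s := by
          intro s hs
          have h1 := hu s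
          have h2 := hncnt s hs
          rw [hn'def]
          simp only
          rw [hcdef] at h1
          simp only at h1
          omega
        have elt1 : ∑ s ∈ S, (u s : ℤ) * sSup (s : Set ℤ) ∈ ∑ s ∈ S, u s • s :=
          GS.sum_mem_sum fun s hs => GS.nsmul_mem_nsmul (GS.finset_sSup_mem (hS s hs)) (u s)
        have elt2 := GS.lower_min S hS l n'
          (fun e he => (hmemD e).mp (hlD e he)) hlen
        rw [hlsum] at elt2
        have hsum' : ∑ s ∈ S, ((n' s : ℕ) : ℤ) * sInf (s : Set ℤ)
            = (∑ s ∈ S, (n s : ℤ) * sInf (s : Set ℤ)) - ∑ s ∈ S, (u s : ℤ) * sInf (s : Set ℤ) := by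
          rw [← Finset.sum_sub_distrib]
          refine Finset.sum_congr rfl fun s hs => ?_
          rw [hn'cast s hs]; ring
        have hVsplit : V = (∑ s ∈ S, (u s : ℤ) * sSup (s : Set ℤ))
            - ∑ s ∈ S, (u s : ℤ) * sInf (s : Set ℤ) := by
          rw [hVdef, ← Finset.sum_sub_distrib]
          refine Finset.sum_congr rfl fun s hs => ?_
          ring
        have hval : (∑ s ∈ S, (u s : ℤ) * sSup (s : Set ℤ))
            + ((∑ s ∈ S, ((n' s : ℕ) : ℤ) * sInf (s : Set ℤ)) + z) = r := by
          rw [hsum', ← hL]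
          have hxeq : r = GS.lo w + x := by omega
          omega
        show r ∈ ∑ s ∈ S, n s • s
        rw [hsplit, ← hval]
        exact Finset.add_mem_add elt1 elt2
end
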